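/- arXiv:1203.0292 — 8 statements merged into one kernel-verified Lean document; each statement's English description precedes it below -/
import Mathlib

section
/- Let P ⊆ ℝ^p be a closed convex cone containing the origin that is pointed (P ∩ (−P) = {0}). Then every nonempty compact subset K of ℝ^p is externally stable with respect to P, i.e., K ⊆ E(K,P) + P. -/
open Pointwise

/-- The Pareto optimal set `E(S,P)`: elements `y₁ ∈ S` such that there is no
`y₂ ∈ S`, `y₂ ≠ y₁`, with `y₁ ∈ y₂ + P`. -/
def paretoSet {p : ℕ} (P S : Set (Fin p → ℝ)) : Set (Fin p → ℝ) :=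
  {y₁ | y₁ ∈ S ∧ ¬ ∃ y₂ ∈ S, y₂ ≠ y₁ ∧ y₁ ∈ {y₂} + P}

/-- Every nonempty compact subset `K` of `ℝ^p` is externally stable with respect to a
closed pointed convex cone `P` containing the origin: `K ⊆ E(K,P) + P`. -/
theorem compact_externally_stable {p : ℕ} (P : Set (Fin p → ℝ))
    (hP0 : (0 : Fin p → ℝ) ∈ P)
    (hPconv : Convex ℝ P)
    (hPcone : ∀ (c : ℝ), 0 ≤ c → ∀ x ∈ P, c • x ∈ P)
    (hPclosed : IsClosed P)
    (hPpointed : P ∩ (-P) = {0})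
    (K : Set (Fin p → ℝ)) (hKne : K.Nonempty) (hK : IsCompact K) :
    K ⊆ paretoSet P K + P := by
  -- P is closed under addition
  have hPadd : ∀ a ∈ P, ∀ b ∈ P, a + b ∈ P := by
    intro a ha b hb
    have hmid : (1/2 : ℝ) • a + (1/2 : ℝ) • b ∈ P :=
      hPconv ha hb (by norm_num) (by norm_num) (by norm_num)
    have := hPcone 2 (by norm_num) _ hmid
    have h2 : (2 : ℝ) • ((1/2 : ℝ) • a + (1/2 : ℝ) • b) = a + b := by
      rw [smul_add, smul_smul, smul_smul]; norm_num
    rwa [h2] at this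
  have hPanti : ∀ u, u ∈ P → -u ∈ P → u = 0 := by
    intro u hu hnu
    have : u ∈ P ∩ (-P) := ⟨hu, by simpa [Set.mem_neg] using hnu⟩
    rw [hPpointed] at this
    simpa using this
  intro y hy
  -- the section below y
  set s : Set (Fin p → ℝ) := {x | x ∈ K ∧ y - x ∈ P} with hs
  have hclosed_sec : ∀ a : Fin p → ℝ, IsClosed {x | a - x ∈ P} := by
    intro a
    exact hPclosed.preimage (continuous_const.sub continuous_id)
  have hsK : s ⊆ K := fun x hx => hx.1
  have hscompact : IsCompact s := by
    have : s = K ∩ {x | y - x ∈ P} := rfl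
    rw [this]
    exact hK.inter_right (hclosed_sec y)
  have hsclosed : IsClosed s := by
    have : s = K ∩ {x | y - x ∈ P} := rfl
    rw [this]
    exact hK.isClosed.inter (hclosed_sec y)
  have hys : y ∈ s := ⟨hy, by simpa using hP0⟩
  -- the family of lower sections
  set D : (Fin p → ℝ) → Set (Fin p → ℝ) := fun a => {x | x ∈ s ∧ a - x ∈ P} with hD
  have hDself : ∀ a ∈ s, a ∈ D a := fun a ha => ⟨ha, by simpa using hP0⟩
  have hDsub : ∀ a, D a ⊆ s := fun a x hx => hx.1
  have hDclosed : ∀ a, IsClosed (D a) := by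
    intro a
    have : D a = s ∩ {x | a - x ∈ P} := rfl
    rw [this]
    exact hsclosed.inter (hclosed_sec a)
  have hDcompact : ∀ a, IsCompact (D a) := by
    intro a
    have : D a = s ∩ {x | a - x ∈ P} := rfl
    rw [this]
    exact hscompact.inter_right (hclosed_sec a)
  -- transitivity helper
  have htrans : ∀ a b c : Fin p → ℝ, a - b ∈ P → b - c ∈ P → a - c ∈ P := by
    intro a b c h1 h2
    have := hPadd _ h1 _ h2
    simpa using this
  set F : Set (Set (Fin p → ℝ)) := {T | ∃ a ∈ s, T = D a} with hF
  have hchainlb : ∀ c ⊆ F, IsChain (· ⊆ ·) c → c.Nonempty →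
      ∃ lb ∈ F, ∀ T ∈ c, lb ⊆ T := by
    intro c hcF hchain hcne
    have hne : Nonempty c := hcne.to_subtype
    have hdir : DirectedOn (· ⊇ ·) c := IsChain.directedOn hchain.symm
    have hnonempty : ∀ U ∈ c, U.Nonempty := by
      intro U hU
      obtain ⟨a, ha, rfl⟩ := hcF hU
      exact ⟨a, hDself a ha⟩
    have hcmp : ∀ U ∈ c, IsCompact U := by
      intro U hU; obtain ⟨a, _, rfl⟩ := hcF hU; exact hDcompact a
    have hcl : ∀ U ∈ c, IsClosed U := by
      intro U hU; obtain ⟨a, _, rfl⟩ := hcF hU; exact hDclosed a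
    obtain ⟨x, hx⟩ :=
      IsCompact.nonempty_sInter_of_directed_nonempty_isCompact_isClosed hdir hnonempty hcmp hcl
    have hxs : x ∈ s := by
      obtain ⟨U, hU⟩ := hcne
      obtain ⟨a, _, rfl⟩ := hcF hU
      exact (hx _ hU).1
    refine ⟨D x, ⟨x, hxs, rfl⟩, ?_⟩
    intro U hU
    obtain ⟨a, ha, rfl⟩ := hcF hU
    rintro w ⟨hws, hw⟩
    have hax : a - x ∈ P := (hx _ hU).2
    exact ⟨hws, htrans a x w hax hw⟩
  obtain ⟨m, hmy, hmmin⟩ := zorn_superset_nonempty F hchainlb (D y) ⟨y, hys, rfl⟩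
  obtain ⟨z, hzs, hzD⟩ := hmmin.1
  refine Set.mem_add.2 ⟨z, ?_, y - z, hzs.2, by abel⟩
  refine ⟨hsK hzs, ?_⟩
  rintro ⟨y₂, hy₂K, hy₂ne, hy₂mem⟩
  obtain ⟨a, ha, b, hb, hab⟩ := Set.mem_add.1 hy₂mem
  rw [Set.mem_singleton_iff] at ha
  have hzy₂ : z - y₂ ∈ P := by
    have : z - y₂ = b := by rw [← hab, ha]; abel
    rwa [this]
  have hy₂s : y₂ ∈ s := ⟨hy₂K, htrans y z y₂ hzs.2 hzy₂⟩
  have hsub : D y₂ ⊆ D z := by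
    rintro w ⟨hws, hw⟩
    exact ⟨hws, htrans z y₂ w hzy₂ hw⟩
  have heq : D y₂ = m :=
    Set.Subset.antisymm (hzD ▸ hsub) (hmmin.2 ⟨y₂, hy₂s, rfl⟩ (hzD ▸ hsub))
  have hzDy₂ : z ∈ D y₂ := by
    rw [heq, hzD]; exact hDself z hzs
  have : z - y₂ = 0 := by
    refine hPanti _ hzy₂ ?_
    have := hzDy₂.2
    simpa [neg_sub] using this
  exact hy₂ne (sub_eq_zero.1 this).symm
end

section
/- Let P ⊆ ℝ^p be a pointed convex cone containing the origin, and let S₁ and S₂ be finite subsets of ℝ^p. Then E(S₁ ∪ S₂, P) = E(S₁ ∪ E(S₂,P), P). -/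
open Pointwise

lemma mem_singleton_add_iff {p : ℕ} (P : Set (Fin p → ℝ)) (z y : Fin p → ℝ) :
    y ∈ {z} + P ↔ y - z ∈ P := by
  constructor
  · rintro ⟨a, ha, b, hb, rfl⟩
    simp only [Set.mem_singleton_iff] at ha
    subst ha
    simpa using hb
  · intro h
    exact ⟨z, rfl, y - z, h, by module⟩

lemma cone_add_mem {p : ℕ} (P : Set (Fin p → ℝ))
    (hPconv : Convex ℝ P)
    (hPcone : ∀ (c : ℝ), 0 ≤ c → ∀ x ∈ P, c • x ∈ P)
    {a b : Fin p → ℝ} (ha : a ∈ P) (hb : b ∈ P) : a + b ∈ P := by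
  have hmid : (1/2 : ℝ) • a + (1/2 : ℝ) • b ∈ P :=
    hPconv ha hb (by norm_num) (by norm_num) (by norm_num)
  have := hPcone 2 (by norm_num) _ hmid
  have h2 : (2 : ℝ) • ((1/2 : ℝ) • a + (1/2 : ℝ) • b) = a + b := by
    rw [smul_add, smul_smul, smul_smul]; norm_num
  rwa [h2] at this

lemma cone_antisymm {p : ℕ} (P : Set (Fin p → ℝ))
    (hPpointed : P ∩ (-P) = {0})
    {a b : Fin p → ℝ} (hab : a - b ∈ P) (hba : b - a ∈ P) : a = b := by
  have : b - a ∈ P ∩ (-P) := ⟨hba, by simpa using hab⟩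
  rw [hPpointed, Set.mem_singleton_iff, sub_eq_zero] at this
  exact this.symm

/-- Every element of a finite set is dominated by a Pareto optimal element. -/
lemma exists_pareto_dom {p : ℕ} (P : Set (Fin p → ℝ))
    (hP0 : (0 : Fin p → ℝ) ∈ P)
    (hPconv : Convex ℝ P)
    (hPcone : ∀ (c : ℝ), 0 ≤ c → ∀ x ∈ P, c • x ∈ P)
    (hPpointed : P ∩ (-P) = {0})
    (S : Set (Fin p → ℝ)) (hS : S.Finite) {x : Fin p → ℝ} (hx : x ∈ S) :
    ∃ z ∈ paretoSet P S, x - z ∈ P := by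
  set r : (Fin p → ℝ) → (Fin p → ℝ) → Prop := fun a b => a ≠ b ∧ b - a ∈ P with hr
  haveI : IsIrrefl (Fin p → ℝ) r := ⟨fun a h => h.1 rfl⟩
  haveI : IsTrans (Fin p → ℝ) r := by
    constructor
    rintro a b c ⟨hab, hba⟩ ⟨hbc, hcb⟩
    refine ⟨fun h => ?_, ?_⟩
    · subst h
      exact hab (cone_antisymm P hPpointed hcb hba)
    · have := cone_add_mem P hPconv hPcone hcb hba
      rwa [sub_add_sub_cancel] at this
  haveI : IsStrictOrder (Fin p → ℝ) r := {}
  have hwf : S.WellFoundedOn r := hS.wellFoundedOn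
  rw [Set.wellFoundedOn_iff] at hwf
  obtain ⟨m, hm, hmin⟩ := hwf.has_min {w ∈ S | x - w ∈ P}
    ⟨x, hx, by simpa using hP0⟩
  refine ⟨m, ⟨hm.1, ?_⟩, hm.2⟩
  rintro ⟨y₂, hy₂S, hy₂ne, hy₂dom⟩
  rw [mem_singleton_add_iff] at hy₂dom
  have hy₂in : y₂ ∈ {w ∈ S | x - w ∈ P} := by
    refine ⟨hy₂S, ?_⟩
    have := cone_add_mem P hPconv hPcone hm.2 hy₂dom
    rwa [sub_add_sub_cancel] at this
  exact hmin y₂ hy₂in ⟨⟨hy₂ne, hy₂dom⟩, hy₂S, hm.1⟩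

/-- For a pointed convex cone `P` containing the origin and finite sets `S₁, S₂ ⊆ ℝ^p`,
`E(S₁ ∪ S₂, P) = E(S₁ ∪ E(S₂,P), P)`. -/
theorem pareto_union_eq_pareto_union_pareto {p : ℕ} (P : Set (Fin p → ℝ))
    (hP0 : (0 : Fin p → ℝ) ∈ P)
    (hPconv : Convex ℝ P)
    (hPcone : ∀ (c : ℝ), 0 ≤ c → ∀ x ∈ P, c • x ∈ P)
    (hPpointed : P ∩ (-P) = {0})
    (S₁ S₂ : Set (Fin p → ℝ)) (hS₁ : S₁.Finite) (hS₂ : S₂.Finite) :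
    paretoSet P (S₁ ∪ S₂) = paretoSet P (S₁ ∪ paretoSet P S₂) := by
  have hsub : paretoSet P S₂ ⊆ S₂ := fun z hz => hz.1
  ext y
  constructor
  · rintro ⟨hyS, hynd⟩
    refine ⟨?_, ?_⟩
    · rcases hyS with h | h
      · exact Or.inl h
      · refine Or.inr ⟨h, fun ⟨y₂, hy₂S, hne, hdom⟩ =>
          hynd ⟨y₂, Or.inr hy₂S, hne, hdom⟩⟩
    · rintro ⟨y₂, hy₂, hne, hdom⟩
      exact hynd ⟨y₂, hy₂.imp id (fun h => hsub h), hne, hdom⟩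
  · rintro ⟨hyS, hynd⟩
    refine ⟨hyS.imp id (fun h => hsub h), ?_⟩
    rintro ⟨y₂, hy₂, hne, hdom⟩
    rw [mem_singleton_add_iff] at hdom
    rcases hy₂ with h | h
    · exact hynd ⟨y₂, Or.inl h, hne, (mem_singleton_add_iff P _ _).2 hdom⟩
    · obtain ⟨z, hzE, hzdom⟩ := exists_pareto_dom P hP0 hPconv hPcone hPpointed S₂ hS₂ h
      have hydz : y - z ∈ P := by
        have := cone_add_mem P hPconv hPcone hdom hzdom
        rwa [sub_add_sub_cancel] at this
      have hzny : z ≠ y := by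
        rintro rfl
        exact hne (cone_antisymm P hPpointed hzdom hdom)
      exact hynd ⟨z, Or.inr hzE, hzny, (mem_singleton_add_iff P _ _).2 hydz⟩
end

section
/- Let P ⊆ ℝ^p be a pointed convex cone containing the origin, let I ≥ 1, and let S₁,…,S_I be finite subsets of ℝ^p. Define E₁ = E(S₁,P) and recursively E_{i+1} = E(S_{i+1} ∪ E_i, P) for 1 ≤ i < I. Then E(S₁ ∪ … ∪ S_I, P) = E_I. -/
open Pointwise

lemma mem_singleton_add' {p : ℕ} {P : Set (Fin p → ℝ)} {y₁ y₂ : Fin p → ℝ} :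
    y₁ ∈ ({y₂} : Set (Fin p → ℝ)) + P ↔ y₁ - y₂ ∈ P := by
  constructor
  · rintro ⟨a, ha, b, hb, rfl⟩
    simp only [Set.mem_singleton_iff] at ha; subst ha
    simpa using hb
  · intro h
    refine ⟨y₂, rfl, y₁ - y₂, h, ?_⟩
    show y₂ + (y₁ - y₂) = y₁
    abel

lemma mem_paretoSet' {p : ℕ} {P S : Set (Fin p → ℝ)} {y₁ : Fin p → ℝ} :
    y₁ ∈ paretoSet P S ↔ y₁ ∈ S ∧ ∀ y₂ ∈ S, y₁ - y₂ ∈ P → y₂ = y₁ := by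
  unfold paretoSet
  simp only [Set.mem_setOf_eq, mem_singleton_add']
  push_neg
  constructor
  · rintro ⟨h1, h2⟩; exact ⟨h1, fun y₂ hy₂ hP => by
      by_contra hne; exact (h2 y₂ hy₂ hne) hP⟩
  · rintro ⟨h1, h2⟩; exact ⟨h1, fun y₂ hy₂ hne => fun hP => hne (h2 y₂ hy₂ hP)⟩

lemma paretoSet_subset' {p : ℕ} {P S : Set (Fin p → ℝ)} : paretoSet P S ⊆ S :=
  fun _ h => h.1

section Main

variable {p : ℕ} {P : Set (Fin p → ℝ)}

lemma P_add_mem (hPconv : Convex ℝ P) (hPcone : ∀ (c : ℝ), 0 ≤ c → ∀ x ∈ P, c • x ∈ P)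
    {a b : Fin p → ℝ} (ha : a ∈ P) (hb : b ∈ P) : a + b ∈ P := by
  have h := hPconv ha hb (by norm_num : (0:ℝ) ≤ 1/2) (by norm_num : (0:ℝ) ≤ 1/2)
    (by norm_num)
  have h2 := hPcone 2 (by norm_num) _ h
  have : (2 : ℝ) • ((1/2 : ℝ) • a + (1/2 : ℝ) • b) = a + b := by
    rw [smul_add, smul_smul, smul_smul]; norm_num
  rwa [this] at h2

/-- Every element of a finite set is (weakly) dominated by a Pareto element. -/
lemma exists_pareto_dominator (hP0 : (0 : Fin p → ℝ) ∈ P)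
    (hadd : ∀ a ∈ P, ∀ b ∈ P, a + b ∈ P)
    (hPpointed : P ∩ (-P) = {0})
    {S : Set (Fin p → ℝ)} (hS : S.Finite) :
    ∀ x ∈ S, ∃ w ∈ paretoSet P S, x - w ∈ P := by
  classical
  have key : ∀ n : ℕ, ∀ x ∈ S,
      (hS.toFinset.filter (fun z => z ≠ x ∧ x - z ∈ P)).card ≤ n →
      ∃ w ∈ paretoSet P S, x - w ∈ P := by
    intro n
    induction n with
    | zero =>
      intro x hx hcard
      refine ⟨x, ?_, by simpa using hP0⟩
      rw [mem_paretoSet']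
      refine ⟨hx, fun y₂ hy₂ hP => ?_⟩
      by_contra hne
      have : y₂ ∈ hS.toFinset.filter (fun z => z ≠ x ∧ x - z ∈ P) := by
        simp [Set.Finite.mem_toFinset, hy₂, hne, hP]
      have := Finset.card_pos.mpr ⟨y₂, this⟩
      omega
    | succ n ih =>
      intro x hx hcard
      by_cases hpar : x ∈ paretoSet P S
      · exact ⟨x, hpar, by simpa using hP0⟩
      · rw [mem_paretoSet'] at hpar
        push_neg at hpar
        obtain ⟨z, hzS, hzP, hzne⟩ := hpar hx
        -- D z ⊂ D x
        have hsub : hS.toFinset.filter (fun w => w ≠ z ∧ z - w ∈ P) ⊂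
            hS.toFinset.filter (fun w => w ≠ x ∧ x - w ∈ P) := by
          constructor
          · intro w hw
            simp only [Finset.mem_filter, Set.Finite.mem_toFinset] at hw ⊢
            obtain ⟨hwS, hwz, hwP⟩ := hw
            have hxw : x - w ∈ P := by
              have := hadd _ hzP _ hwP
              have heq : (x - z) + (z - w) = x - w := by abel
              rwa [heq] at this
            refine ⟨hwS, ?_, hxw⟩
            rintro rfl
            have h1 : z - w ∈ P := hwP
            have h2 : w - z ∈ P := hzP
            have : z - w ∈ P ∩ (-P) := ⟨h1, by simpa using (show -(z - w) ∈ P by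
              rwa [neg_sub])⟩
            rw [hPpointed] at this
            have : z = w := by
              have := this
              simp only [Set.mem_singleton_iff, sub_eq_zero] at this
              exact this
            exact hwz this.symm
          · intro hle
            have hz_mem : z ∈ hS.toFinset.filter (fun w => w ≠ x ∧ x - w ∈ P) := by
              simp [Set.Finite.mem_toFinset, hzS, hzne, hzP]
            have hz_not : z ∉ hS.toFinset.filter (fun w => w ≠ z ∧ z - w ∈ P) := by
              simp
            exact hz_not (hle hz_mem)
        have hcard' : (hS.toFinset.filter (fun w => w ≠ z ∧ z - w ∈ P)).card ≤ n := by
          have := Finset.card_lt_card hsub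
          omega
        obtain ⟨w, hwPar, hwP⟩ := ih z hzS hcard'
        refine ⟨w, hwPar, ?_⟩
        have := hadd _ hzP _ hwP
        have heq : (x - z) + (z - w) = x - w := by abel
        rwa [heq] at this
  intro x hx
  exact key _ x hx le_rfl

/-- Key reduction lemma. -/
lemma pareto_union_eq (hP0 : (0 : Fin p → ℝ) ∈ P)
    (hadd : ∀ a ∈ P, ∀ b ∈ P, a + b ∈ P)
    (hPpointed : P ∩ (-P) = {0})
    {A B : Set (Fin p → ℝ)} (hB : B.Finite) :
    paretoSet P (A ∪ B) = paretoSet P (A ∪ paretoSet P B) := by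
  ext y
  rw [mem_paretoSet', mem_paretoSet']
  constructor
  · rintro ⟨hy, hmin⟩
    refine ⟨?_, fun z hz hzP => hmin z (hz.imp id (fun h => paretoSet_subset' h)) hzP⟩
    rcases hy with hy | hy
    · exact Or.inl hy
    · refine Or.inr ?_
      rw [mem_paretoSet']
      exact ⟨hy, fun z hz hzP => hmin z (Or.inr hz) hzP⟩
  · rintro ⟨hy, hmin⟩
    refine ⟨hy.imp id (fun h => paretoSet_subset' h), fun z hz hzP => ?_⟩
    rcases hz with hz | hz
    · exact hmin z (Or.inl hz) hzP
    · obtain ⟨w, hwPar, hwP⟩ := exists_pareto_dominator hP0 hadd hPpointed hB z hz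
      have hyw : y - w ∈ P := by
        have := hadd _ hzP _ hwP
        have heq : (y - z) + (z - w) = y - w := by abel
        rwa [heq] at this
      have hwy : w = y := hmin w (Or.inr hwPar) hyw
      have h2 : z - y ∈ P := hwy ▸ hwP
      have hmem : y - z ∈ P ∩ (-P) :=
        ⟨hzP, by simpa using (show -(y - z) ∈ P by rwa [neg_sub])⟩
      rw [hPpointed] at hmem
      simp only [Set.mem_singleton_iff, sub_eq_zero] at hmem
      exact hmem.symm

end Main

/-- For a pointed convex cone `P ⊆ ℝ^p` containing the origin, `I ≥ 1`, finite sets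
`S₁, …, S_I ⊆ ℝ^p`, and the sequence defined by `E₁ = E(S₁,P)` and
`E_{i+1} = E(S_{i+1} ∪ E_i, P)` for `1 ≤ i < I`, one has `E(S₁ ∪ … ∪ S_I, P) = E_I`. -/
theorem pareto_biUnion_eq_recursive {p : ℕ} (P : Set (Fin p → ℝ))
    (hP0 : (0 : Fin p → ℝ) ∈ P)
    (hPconv : Convex ℝ P)
    (hPcone : ∀ (c : ℝ), 0 ≤ c → ∀ x ∈ P, c • x ∈ P)
    (hPpointed : P ∩ (-P) = {0})
    (I : ℕ) (hI : 1 ≤ I)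
    (S : ℕ → Set (Fin p → ℝ)) (hS : ∀ i, 1 ≤ i → i ≤ I → (S i).Finite)
    (E : ℕ → Set (Fin p → ℝ))
    (hE1 : E 1 = paretoSet P (S 1))
    (hErec : ∀ i, 1 ≤ i → i < I → E (i + 1) = paretoSet P (S (i + 1) ∪ E i)) :
    paretoSet P (⋃ i ∈ Finset.Icc 1 I, S i) = E I := by
  have hadd : ∀ a ∈ P, ∀ b ∈ P, a + b ∈ P :=
    fun a ha b hb => P_add_mem hPconv hPcone ha hb
  have main : ∀ J, 1 ≤ J → J ≤ I →
      paretoSet P (⋃ i ∈ Finset.Icc 1 J, S i) = E J := by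
    intro J
    induction J with
    | zero => intro h; omega
    | succ J ihJ =>
      intro h1 hle
      rcases Nat.eq_zero_or_pos J with rfl | hJ
      · simp only [Finset.Icc_self, Finset.mem_singleton, Set.iUnion_iUnion_eq_left]
        simpa using hE1.symm
      · have hJle : J ≤ I := by omega
        have hIcc : Finset.Icc 1 (J + 1) = insert (J + 1) (Finset.Icc 1 J) := by
          ext k
          simp only [Finset.mem_Icc, Finset.mem_insert, Finset.mem_Icc]
          omega
        have hUnion : (⋃ i ∈ Finset.Icc 1 (J + 1), S i) =
            S (J + 1) ∪ ⋃ i ∈ Finset.Icc 1 J, S i := by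
          rw [hIcc]
          simp [Set.biUnion_insert]
        have hBfin : (⋃ i ∈ Finset.Icc 1 J, S i).Finite := by
          apply Set.Finite.biUnion (Finset.Icc 1 J).finite_toSet
          intro i hi
          simp only [Finset.coe_Icc, Set.mem_Icc] at hi
          exact hS i hi.1 (by omega)
        rw [hUnion, pareto_union_eq hP0 hadd hPpointed hBfin,
          ihJ hJ hJle, ← hErec J hJ (by omega)]
  exact main I hI le_rfl
end

section
/- The set-valued map φ has closed graph (the set {((t,x,z),(s,v,w)) : (s,v,w) ∈ φ(t,x,z)} is closed in (ℝ × ℝ^n × ℝ^p)²), each value φ(t,x,z) is nonempty, convex and compact, and every value is contained in the closed ball of radius max{1, M_FL} about the origin, where M_FL = max{M_f, M_L}. -/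
open Pointwise Topology

/-- `FL^σ(x)`: the closure of the convex hull of `{(f(x,u), σ·L(x,u)) : u ∈ U}`. -/
def FLset {n m p : ℕ}
    (f : (Fin n → ℝ) → (Fin m → ℝ) → (Fin n → ℝ))
    (L : (Fin n → ℝ) → (Fin m → ℝ) → (Fin p → ℝ))
    (U : Set (Fin m → ℝ)) (σ : ℝ) (x : Fin n → ℝ) :
    Set ((Fin n → ℝ) × (Fin p → ℝ)) :=
  closure (convexHull ℝ {q | ∃ u ∈ U, q = (f x u, σ • L x u)})

/-- The expanded set-valued map `φ`: `φ(t,x,z) = {1} × FL⁻(x)` if `t < T`, and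
`φ(t,x,z) = [0,1] × cl(co(FL⁻(x) ∪ {(0,0)}))` if `t ≥ T`. -/
def phiMap {n p : ℕ} (T : ℝ)
    (FLm : (Fin n → ℝ) → Set ((Fin n → ℝ) × (Fin p → ℝ)))
    (q : ℝ × (Fin n → ℝ) × (Fin p → ℝ)) :
    Set (ℝ × ((Fin n → ℝ) × (Fin p → ℝ))) :=
  if q.1 < T then {(1 : ℝ)} ×ˢ FLm q.2.1
  else Set.Icc (0 : ℝ) 1 ×ˢ closure (convexHull ℝ (FLm q.2.1 ∪ {0}))

lemma aux_infDist_le_of_mem_cthickening {α : Type*} [PseudoMetricSpace α] {s : Set α}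
    (hs : s.Nonempty) {δ : ℝ} (hδ : 0 ≤ δ) {x : α} (hx : x ∈ Metric.cthickening δ s) :
    Metric.infDist x s ≤ δ := by
  rw [Metric.mem_cthickening_iff] at hx
  calc Metric.infDist x s = (EMetric.infEdist x s).toReal := rfl
    _ ≤ (ENNReal.ofReal δ).toReal := ENNReal.toReal_mono ENNReal.ofReal_ne_top hx
    _ = δ := ENNReal.toReal_ofReal hδ

/-- The set-valued map `φ` has closed graph, and each value `φ(t,x,z)` is nonempty,
convex, compact and contained in the closed ball of radius `max{1, max{M_f, M_L}}`
about the origin. -/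
theorem phiMap_marchaud {n m p : ℕ}
    (f : (Fin n → ℝ) → (Fin m → ℝ) → (Fin n → ℝ))
    (L : (Fin n → ℝ) → (Fin m → ℝ) → (Fin p → ℝ))
    (U : Set (Fin m → ℝ)) (hUne : U.Nonempty) (hUc : IsCompact U)
    (hf : ContinuousOn (fun q : (Fin n → ℝ) × (Fin m → ℝ) => f q.1 q.2) (Set.univ ×ˢ U))
    (hL : ContinuousOn (fun q : (Fin n → ℝ) × (Fin m → ℝ) => L q.1 q.2) (Set.univ ×ˢ U))
    (Kf KL : ℝ) (hKf : 0 ≤ Kf) (hKL : 0 ≤ KL)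
    (Mf ML : ℝ) (hMf : 0 < Mf) (hML : 0 ≤ ML)
    (hfLip : ∀ u ∈ U, ∀ x₁ x₂ : Fin n → ℝ, ‖f x₁ u - f x₂ u‖ ≤ Kf * ‖x₁ - x₂‖)
    (hLLip : ∀ u ∈ U, ∀ x₁ x₂ : Fin n → ℝ, ‖L x₁ u - L x₂ u‖ ≤ KL * ‖x₁ - x₂‖)
    (hfBdd : ∀ (x : Fin n → ℝ), ∀ u ∈ U, ‖f x u‖ ≤ Mf)
    (hLBdd : ∀ (x : Fin n → ℝ), ∀ u ∈ U, ‖L x u‖ ≤ ML)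
    (T : ℝ) (hT : 0 < T) :
    IsClosed {q : (ℝ × (Fin n → ℝ) × (Fin p → ℝ)) × (ℝ × (Fin n → ℝ) × (Fin p → ℝ)) |
        q.2 ∈ phiMap T (FLset f L U (-1)) q.1} ∧
      ∀ q : ℝ × (Fin n → ℝ) × (Fin p → ℝ),
        (phiMap T (FLset f L U (-1)) q).Nonempty ∧
        Convex ℝ (phiMap T (FLset f L U (-1)) q) ∧
        IsCompact (phiMap T (FLset f L U (-1)) q) ∧
        phiMap T (FLset f L U (-1)) q ⊆ Metric.closedBall 0 (max 1 (max Mf ML)) := by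
  classical
  set FLm : (Fin n → ℝ) → Set ((Fin n → ℝ) × (Fin p → ℝ)) := FLset f L U (-1) with hFLm
  set G : (Fin n → ℝ) → Set ((Fin n → ℝ) × (Fin p → ℝ)) :=
    fun x => closure (convexHull ℝ (FLm x ∪ {0})) with hG
  set K : ℝ := max Kf KL with hK
  set M : ℝ := max Mf ML with hM
  have hK0 : 0 ≤ K := le_max_of_le_left hKf
  have hM0 : 0 ≤ M := le_max_of_le_left hMf.le
  -- the generating set
  have hSmem : ∀ (x : Fin n → ℝ), ∀ u ∈ U,
      (f x u, (-1 : ℝ) • L x u) ∈ {q : (Fin n → ℝ) × (Fin p → ℝ) | ∃ u ∈ U, q = (f x u, (-1 : ℝ) • L x u)} :=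
    fun x u hu => ⟨u, hu, rfl⟩
  have hSsubFL : ∀ x : Fin n → ℝ,
      {q : (Fin n → ℝ) × (Fin p → ℝ) | ∃ u ∈ U, q = (f x u, (-1 : ℝ) • L x u)} ⊆ FLm x :=
    fun x => (subset_convexHull ℝ _).trans subset_closure
  -- nonemptiness
  have hFLne : ∀ x, (FLm x).Nonempty := by
    intro x
    obtain ⟨u, hu⟩ := hUne
    exact ⟨_, hSsubFL x (hSmem x u hu)⟩
  have hFLsubG : ∀ x, FLm x ⊆ G x :=
    fun x => (Set.subset_union_left).trans ((subset_convexHull ℝ _).trans subset_closure)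
  have hGne : ∀ x, (G x).Nonempty := fun x => (hFLne x).mono (hFLsubG x)
  -- boundedness
  have hFLsub : ∀ x, FLm x ⊆ Metric.closedBall 0 M := by
    intro x
    apply closure_minimal _ Metric.isClosed_closedBall
    apply convexHull_min _ (convex_closedBall _ _)
    rintro q ⟨u, hu, rfl⟩
    rw [mem_closedBall_zero_iff]
    have h1 : ‖f x u‖ ≤ M := (hfBdd x u hu).trans (le_max_left _ _)
    have h2 : ‖(-1 : ℝ) • L x u‖ ≤ M := by
      rw [norm_smul]
      simp only [norm_neg, norm_one, one_mul]
      exact (hLBdd x u hu).trans (le_max_right Mf ML)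
    exact max_le h1 h2
  have hGsub : ∀ x, G x ⊆ Metric.closedBall 0 M := by
    intro x
    apply closure_minimal _ Metric.isClosed_closedBall
    apply convexHull_min _ (convex_closedBall _ _)
    rintro q (hq | hq)
    · exact hFLsub x hq
    · simp only [Set.mem_singleton_iff] at hq
      subst hq
      simpa using hM0
  -- compactness and convexity
  have hFLcompact : ∀ x, IsCompact (FLm x) := fun x =>
    (isCompact_closedBall (0 : (Fin n → ℝ) × (Fin p → ℝ)) M).of_isClosed_subset
      isClosed_closure (hFLsub x)
  have hGcompact : ∀ x, IsCompact (G x) := fun x =>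
    (isCompact_closedBall (0 : (Fin n → ℝ) × (Fin p → ℝ)) M).of_isClosed_subset
      isClosed_closure (hGsub x)
  have hFLconv : ∀ x, Convex ℝ (FLm x) := fun x => (convex_convexHull ℝ _).closure
  have hGconv : ∀ x, Convex ℝ (G x) := fun x => (convex_convexHull ℝ _).closure
  -- Lipschitz/Hausdorff estimate for FLm
  have hHaus : ∀ x₁ x₂ : Fin n → ℝ, ∀ q ∈ FLm x₁,
      Metric.infDist q (FLm x₂) ≤ K * dist x₁ x₂ := by
    intro x₁ x₂ q hq
    have hδ : 0 ≤ K * dist x₁ x₂ := mul_nonneg hK0 dist_nonneg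
    have hsub : FLm x₁ ⊆ Metric.cthickening (K * dist x₁ x₂) (FLm x₂) := by
      apply closure_minimal _ Metric.isClosed_cthickening
      apply convexHull_min _ ((hFLconv x₂).cthickening _)
      rintro q' ⟨u, hu, rfl⟩
      apply Metric.mem_cthickening_of_dist_le _ (f x₂ u, (-1 : ℝ) • L x₂ u) _ _
        (hSsubFL x₂ (hSmem x₂ u hu))
      rw [Prod.dist_eq]
      have h1 : dist (f x₁ u) (f x₂ u) ≤ K * dist x₁ x₂ := by
        rw [dist_eq_norm, dist_eq_norm]
        exact (hfLip u hu x₁ x₂).trans (mul_le_mul_of_nonneg_right (le_max_left _ _) (norm_nonneg _))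
      have h2 : dist ((-1 : ℝ) • L x₁ u) ((-1 : ℝ) • L x₂ u) ≤ K * dist x₁ x₂ := by
        rw [dist_eq_norm, dist_eq_norm, ← smul_sub, norm_smul]
        simp only [norm_neg, norm_one, one_mul]
        exact (hLLip u hu x₁ x₂).trans (mul_le_mul_of_nonneg_right (le_max_right _ _) (norm_nonneg _))
      exact max_le h1 h2
    exact aux_infDist_le_of_mem_cthickening (hFLne x₂) hδ (hsub hq)
  -- Lipschitz/Hausdorff estimate for G
  have hHausG : ∀ x₁ x₂ : Fin n → ℝ, ∀ q ∈ G x₁,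
      Metric.infDist q (G x₂) ≤ K * dist x₁ x₂ := by
    intro x₁ x₂ q hq
    have hδ : 0 ≤ K * dist x₁ x₂ := mul_nonneg hK0 dist_nonneg
    have hsubFL : FLm x₁ ⊆ Metric.cthickening (K * dist x₁ x₂) (FLm x₂) := by
      apply closure_minimal _ Metric.isClosed_cthickening
      apply convexHull_min _ ((hFLconv x₂).cthickening _)
      rintro q' ⟨u, hu, rfl⟩
      apply Metric.mem_cthickening_of_dist_le _ (f x₂ u, (-1 : ℝ) • L x₂ u) _ _
        (hSsubFL x₂ (hSmem x₂ u hu))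
      rw [Prod.dist_eq]
      have h1 : dist (f x₁ u) (f x₂ u) ≤ K * dist x₁ x₂ := by
        rw [dist_eq_norm, dist_eq_norm]
        exact (hfLip u hu x₁ x₂).trans (mul_le_mul_of_nonneg_right (le_max_left _ _) (norm_nonneg _))
      have h2 : dist ((-1 : ℝ) • L x₁ u) ((-1 : ℝ) • L x₂ u) ≤ K * dist x₁ x₂ := by
        rw [dist_eq_norm, dist_eq_norm, ← smul_sub, norm_smul]
        simp only [norm_neg, norm_one, one_mul]
        exact (hLLip u hu x₁ x₂).trans (mul_le_mul_of_nonneg_right (le_max_right _ _) (norm_nonneg _))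
      exact max_le h1 h2
    have hsub : G x₁ ⊆ Metric.cthickening (K * dist x₁ x₂) (G x₂) := by
      apply closure_minimal _ Metric.isClosed_cthickening
      apply convexHull_min _ ((hGconv x₂).cthickening _)
      rintro q' (hq' | hq')
      · exact Metric.cthickening_subset_of_subset _ (hFLsubG x₂) (hsubFL hq')
      · simp only [Set.mem_singleton_iff] at hq'
        subst hq'
        exact Metric.self_subset_cthickening _ (by
          apply subset_closure
          exact subset_convexHull ℝ _ (Set.mem_union_right _ rfl))
    exact aux_infDist_le_of_mem_cthickening (hGne x₂) hδ (hsub hq)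
  constructor
  · -- closed graph
    apply IsSeqClosed.isClosed
    intro Q P hQ hlim
    have htt : Filter.Tendsto (fun k => (Q k).1.1) Filter.atTop (𝓝 P.1.1) :=
      ((continuous_fst.comp continuous_fst).tendsto P).comp hlim
    have htx : Filter.Tendsto (fun k => (Q k).1.2.1) Filter.atTop (𝓝 P.1.2.1) :=
      ((continuous_fst.comp (continuous_snd.comp continuous_fst)).tendsto P).comp hlim
    have hts : Filter.Tendsto (fun k => (Q k).2.1) Filter.atTop (𝓝 P.2.1) :=
      ((continuous_fst.comp continuous_snd).tendsto P).comp hlim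
    have hty : Filter.Tendsto (fun k => (Q k).2.2) Filter.atTop (𝓝 P.2.2) :=
      ((continuous_snd.comp continuous_snd).tendsto P).comp hlim
    -- distance sequence tends to 0
    have hdx : Filter.Tendsto (fun k => K * dist (Q k).1.2.1 P.1.2.1) Filter.atTop (𝓝 0) := by
      have := (htx.dist (tendsto_const_nhds (x := P.1.2.1))).const_mul K
      simpa using this
    have hdy : Filter.Tendsto (fun k => dist P.2.2 (Q k).2.2) Filter.atTop (𝓝 0) := by
      have := (tendsto_const_nhds (x := P.2.2)).dist hty
      simpa using this
    have hsum : Filter.Tendsto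
        (fun k => K * dist (Q k).1.2.1 P.1.2.1 + dist P.2.2 (Q k).2.2) Filter.atTop (𝓝 0) := by
      simpa using hdx.add hdy
    by_cases hPT : P.1.1 < T
    · -- eventually t_k < T
      have hev : ∀ᶠ k in Filter.atTop, (Q k).1.1 < T := htt.eventually_lt_const hPT
      have hmem : ∀ᶠ k in Filter.atTop,
          (Q k).2.1 = 1 ∧ (Q k).2.2 ∈ FLm (Q k).1.2.1 := by
        filter_upwards [hev] with k hk
        have := hQ k
        simp only [Set.mem_setOf_eq, phiMap, if_pos hk, Set.mem_prod, Set.mem_singleton_iff] at this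
        exact this
      -- first coordinate is 1
      have hs1 : P.2.1 = 1 := by
        have : Filter.Tendsto (fun k => (Q k).2.1) Filter.atTop (𝓝 1) := by
          apply Filter.Tendsto.congr' _ (tendsto_const_nhds (x := (1 : ℝ)))
          filter_upwards [hmem] with k hk
          exact hk.1.symm
        exact tendsto_nhds_unique hts this
      -- second coordinate in FLm
      have hinf : Metric.infDist P.2.2 (FLm P.1.2.1) ≤ 0 := by
        apply ge_of_tendsto hsum
        filter_upwards [hmem] with k hk
        calc Metric.infDist P.2.2 (FLm P.1.2.1)
            ≤ Metric.infDist (Q k).2.2 (FLm P.1.2.1) + dist P.2.2 (Q k).2.2 :=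
              Metric.infDist_le_infDist_add_dist
          _ ≤ K * dist (Q k).1.2.1 P.1.2.1 + dist P.2.2 (Q k).2.2 :=
              add_le_add (hHaus _ _ _ hk.2) le_rfl
      have hinf0 : Metric.infDist P.2.2 (FLm P.1.2.1) = 0 :=
        le_antisymm hinf Metric.infDist_nonneg
      have hmemFL : P.2.2 ∈ FLm P.1.2.1 := by
        have h' := (Metric.mem_closure_iff_infDist_zero (hFLne P.1.2.1)).mpr hinf0
        have hcl : IsClosed (FLm P.1.2.1) := isClosed_closure
        rwa [hcl.closure_eq] at h'
      show P.2 ∈ phiMap T FLm P.1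
      simp only [phiMap, if_pos hPT, Set.mem_prod, Set.mem_singleton_iff]
      exact ⟨hs1, hmemFL⟩
    · -- t ≥ T case
      have hall : ∀ k, (Q k).2.1 ∈ Set.Icc (0 : ℝ) 1 ∧ (Q k).2.2 ∈ G (Q k).1.2.1 := by
        intro k
        have := hQ k
        by_cases hk : (Q k).1.1 < T
        · simp only [Set.mem_setOf_eq, phiMap, if_pos hk, Set.mem_prod, Set.mem_singleton_iff] at this
          refine ⟨?_, hFLsubG _ this.2⟩
          rw [this.1]
          exact ⟨zero_le_one, le_refl 1⟩
        · simp only [Set.mem_setOf_eq, phiMap, if_neg hk, Set.mem_prod] at this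
          exact this
      have hsIcc : P.2.1 ∈ Set.Icc (0 : ℝ) 1 :=
        isClosed_Icc.mem_of_tendsto hts (Filter.Eventually.of_forall fun k => (hall k).1)
      have hinf : Metric.infDist P.2.2 (G P.1.2.1) ≤ 0 := by
        apply ge_of_tendsto hsum
        apply Filter.Eventually.of_forall
        intro k
        calc Metric.infDist P.2.2 (G P.1.2.1)
            ≤ Metric.infDist (Q k).2.2 (G P.1.2.1) + dist P.2.2 (Q k).2.2 :=
              Metric.infDist_le_infDist_add_dist
          _ ≤ K * dist (Q k).1.2.1 P.1.2.1 + dist P.2.2 (Q k).2.2 :=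
              add_le_add (hHausG _ _ _ (hall k).2) le_rfl
      have hinf0 : Metric.infDist P.2.2 (G P.1.2.1) = 0 :=
        le_antisymm hinf Metric.infDist_nonneg
      have hmemG : P.2.2 ∈ G P.1.2.1 := by
        have h' := (Metric.mem_closure_iff_infDist_zero (hGne P.1.2.1)).mpr hinf0
        have hcl : IsClosed (G P.1.2.1) := isClosed_closure
        rwa [hcl.closure_eq] at h'
      show P.2 ∈ phiMap T FLm P.1
      simp only [phiMap, if_neg hPT, Set.mem_prod]
      exact ⟨hsIcc, hmemG⟩
  · -- pointwise properties
    intro q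
    by_cases hq : q.1 < T
    · simp only [phiMap, if_pos hq]
      refine ⟨Set.Nonempty.prod ⟨1, rfl⟩ (hFLne q.2.1), ?_, ?_, ?_⟩
      · exact (convex_singleton _).prod (hFLconv q.2.1)
      · exact isCompact_singleton.prod (hFLcompact q.2.1)
      · rintro ⟨s, y⟩ ⟨hs, hy⟩
        simp only [Set.mem_singleton_iff] at hs
        rw [Metric.mem_closedBall, dist_zero_right, Prod.norm_def]
        refine max_le_max ?_ ?_
        · rw [hs]; simp
        · rw [← dist_zero_right]
          exact hFLsub q.2.1 hy
    · simp only [phiMap, if_neg hq]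
      refine ⟨Set.Nonempty.prod ⟨0, le_refl 0, zero_le_one⟩ (hGne q.2.1), ?_, ?_, ?_⟩
      · exact (convex_Icc _ _).prod (hGconv q.2.1)
      · exact isCompact_Icc.prod (hGcompact q.2.1)
      · rintro ⟨s, y⟩ ⟨hs, hy⟩
        rw [Metric.mem_closedBall, dist_zero_right, Prod.norm_def]
        refine max_le_max ?_ ?_
        · rw [Real.norm_eq_abs]
          exact abs_le.mpr ⟨by linarith [hs.1], hs.2⟩
        · rw [← dist_zero_right]
          exact hGsub q.2.1 hy
end

section
/- For every ε > 0, Graph(φ_ε) ⊆ Graph(φ) + g(ε)·B, where g(ε) = ε·max{1,K}·M, K = max{K_f,K_L}, M = max{1, max{M_f,M_L}}, Graph denotes the graph {((t,x,z),(s,v,w)) : (s,v,w) belongs to the value at (t,x,z)} ⊆ (ℝ × ℝ^n × ℝ^p)², and B is the closed unit ball of (ℝ × ℝ^n × ℝ^p)² in the supremum norm. (Consequently g(ε) → 0 as ε → 0⁺.) -/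
open Pointwise

/-- The approximate set-valued map `φ_ε`: `φ_ε(t,x,z) = {1} × (FL⁻(x) + εKM·B)` if
`t < T − Mε`, and `φ_ε(t,x,z) = [0,1] × cl(co((FL⁻(x) + εKM·B) ∪ {(0,0)}))` if
`t ≥ T − Mε`. -/
def phiEpsMap {n p : ℕ} (T ε K M : ℝ)
    (FLm : (Fin n → ℝ) → Set ((Fin n → ℝ) × (Fin p → ℝ)))
    (q : ℝ × (Fin n → ℝ) × (Fin p → ℝ)) :
    Set (ℝ × ((Fin n → ℝ) × (Fin p → ℝ))) :=
  if q.1 < T - M * ε then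
    {(1 : ℝ)} ×ˢ (FLm q.2.1 + Metric.closedBall 0 (ε * K * M))
  else
    Set.Icc (0 : ℝ) 1 ×ˢ
      closure (convexHull ℝ ((FLm q.2.1 + Metric.closedBall 0 (ε * K * M)) ∪ {0}))


lemma clco_add_ball_union_zero_subset {E : Type*} [NormedAddCommGroup E]
    [NormedSpace ℝ E] [ProperSpace E] (A : Set E) (r : ℝ) (hr : 0 ≤ r) :
    closure (convexHull ℝ ((A + Metric.closedBall 0 r) ∪ {0})) ⊆
      closure (convexHull ℝ (A ∪ {0})) + Metric.closedBall 0 r := by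
  have hconv : Convex ℝ (closure (convexHull ℝ (A ∪ {0})) + Metric.closedBall (0:E) r) :=
    ((convex_convexHull ℝ _).closure).add (convex_closedBall 0 r)
  have hclosed : IsClosed (closure (convexHull ℝ (A ∪ {0})) + Metric.closedBall (0:E) r) :=
    IsClosed.add_right_of_isCompact isClosed_closure (isCompact_closedBall 0 r)
  refine closure_minimal (convexHull_min ?_ hconv) hclosed
  rintro y (hy | hy)
  · obtain ⟨a, ha, b, hb, rfl⟩ := Set.mem_add.mp hy
    exact Set.add_mem_add (subset_closure (subset_convexHull ℝ _ (Or.inl ha))) hb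
  · rcases hy with rfl
    exact ⟨0, subset_closure (subset_convexHull ℝ _ (by simp)), 0,
      by simpa using hr, by simp⟩

set_option maxHeartbeats 1600000 in
/-- For every `ε > 0`, `Graph(φ_ε) ⊆ Graph(φ) + g(ε)·B` with
`g(ε) = ε·max{1,K}·M`, `K = max{K_f,K_L}` and `M = max{1, max{M_f,M_L}}`. -/
theorem phiEpsMap_graph_subset {n m p : ℕ}
    (f : (Fin n → ℝ) → (Fin m → ℝ) → (Fin n → ℝ))
    (L : (Fin n → ℝ) → (Fin m → ℝ) → (Fin p → ℝ))
    (U : Set (Fin m → ℝ)) (hUne : U.Nonempty) (hUc : IsCompact U)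
    (hf : ContinuousOn (fun q : (Fin n → ℝ) × (Fin m → ℝ) => f q.1 q.2) (Set.univ ×ˢ U))
    (hL : ContinuousOn (fun q : (Fin n → ℝ) × (Fin m → ℝ) => L q.1 q.2) (Set.univ ×ˢ U))
    (Kf KL : ℝ) (hKf : 0 ≤ Kf) (hKL : 0 ≤ KL)
    (Mf ML : ℝ) (hMf : 0 < Mf) (hML : 0 ≤ ML)
    (hfLip : ∀ u ∈ U, ∀ x₁ x₂ : Fin n → ℝ, ‖f x₁ u - f x₂ u‖ ≤ Kf * ‖x₁ - x₂‖)
    (hLLip : ∀ u ∈ U, ∀ x₁ x₂ : Fin n → ℝ, ‖L x₁ u - L x₂ u‖ ≤ KL * ‖x₁ - x₂‖)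
    (hfBdd : ∀ (x : Fin n → ℝ), ∀ u ∈ U, ‖f x u‖ ≤ Mf)
    (hLBdd : ∀ (x : Fin n → ℝ), ∀ u ∈ U, ‖L x u‖ ≤ ML)
    (T : ℝ) (hT : 0 < T) (ε : ℝ) (hε : 0 < ε) :
    {q : (ℝ × (Fin n → ℝ) × (Fin p → ℝ)) × (ℝ × (Fin n → ℝ) × (Fin p → ℝ)) |
        q.2 ∈ phiEpsMap T ε (max Kf KL) (max 1 (max Mf ML)) (FLset f L U (-1)) q.1} ⊆
      {q : (ℝ × (Fin n → ℝ) × (Fin p → ℝ)) × (ℝ × (Fin n → ℝ) × (Fin p → ℝ)) |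
          q.2 ∈ phiMap T (FLset f L U (-1)) q.1} +
        Metric.closedBall 0 (ε * max 1 (max Kf KL) * max 1 (max Mf ML)) := by
  intro q hq
  set K := max Kf KL with hK
  set M := max 1 (max Mf ML) with hM
  have hK0 : 0 ≤ K := le_trans hKf (le_max_left _ _)
  have hM1 : (1:ℝ) ≤ M := le_max_left _ _
  have hM0 : (0:ℝ) ≤ M := le_trans zero_le_one hM1
  set r := ε * K * M with hr
  set g := ε * max 1 K * M with hg
  have hr0 : 0 ≤ r := by positivity
  have hrg : r ≤ g := by
    rw [hr, hg]
    gcongr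
    exact le_max_right 1 K
  have hMεg : M * ε ≤ g := by
    have h1 : (1:ℝ) ≤ max 1 K := le_max_left _ _
    nlinarith [hε.le]
  obtain ⟨⟨t, x, z⟩, s, v⟩ := q
  simp only [Set.mem_setOf_eq, phiEpsMap] at hq
  by_cases ht : t < T - M * ε
  · rw [if_pos ht] at hq
    obtain ⟨hs, hv⟩ := hq
    obtain ⟨a, ha, b, hb, hab⟩ := Set.mem_add.mp hv
    rcases hs with rfl
    have htT : t < T := by nlinarith [hε]
    refine Set.mem_add.mpr ⟨((t, x, z), (1, a)), ?_, ((0, 0, 0), (0, b)), ?_, ?_⟩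
    · simp only [Set.mem_setOf_eq, phiMap, if_pos htT]
      exact ⟨rfl, ha⟩
    · rw [Metric.mem_closedBall, dist_zero_right]
      have hbn : ‖b‖ ≤ r := by
        simpa [dist_zero_right] using hb
      have : ‖(((0:ℝ), (0 : Fin n → ℝ), (0 : Fin p → ℝ)), ((0:ℝ), b))‖ = ‖b‖ := by
        simp [Prod.norm_def]
      rw [this]
      exact hbn.trans hrg
    · have hab' : a + b = v := hab
      simp [Prod.mk_add_mk, hab']
  · rw [if_neg ht] at hq
    push_neg at ht
    obtain ⟨hs, hv⟩ := hq
    have hv' := clco_add_ball_union_zero_subset (FLset f L U (-1) x) r hr0 hv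
    obtain ⟨c, hc, b, hb, hcb⟩ := Set.mem_add.mp hv'
    refine Set.mem_add.mpr ⟨((max t T, x, z), (s, c)), ?_, ((t - max t T, 0, 0), (0, b)), ?_, ?_⟩
    · simp only [Set.mem_setOf_eq, phiMap, if_neg (not_lt.mpr (le_max_right t T))]
      exact ⟨hs, hc⟩
    · rw [Metric.mem_closedBall, dist_zero_right]
      have hbn : ‖b‖ ≤ r := by simpa [dist_zero_right] using hb
      have h1 : |t - max t T| ≤ M * ε := by
        rw [abs_sub_comm, abs_of_nonneg (by simp [le_max_left])]
        rcases max_cases t T with ⟨h, _⟩ | ⟨h, _⟩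
        · simp [h]; positivity
        · rw [h]; linarith
      have hnorm : ‖(((t - max t T : ℝ), (0 : Fin n → ℝ), (0 : Fin p → ℝ)), ((0:ℝ), b))‖
          = max |t - max t T| ‖b‖ := by
        simp [Prod.norm_def, Real.norm_eq_abs]
      rw [hnorm]
      exact max_le (h1.trans hMεg) (hbn.trans hrg)
    · have hcb' : c + b = v := hcb
      have hsum : max t T + (t - max t T) = t := by ring
      simp [Prod.mk_add_mk, hsum, hcb']
end

section
/- For every ε > 0 and every (t_ε,x_ε,z_ε) ∈ ℝ × ℝ^n × ℝ^p, the union of φ(t,x,z) over all (t,x,z) with ‖(t,x,z) − (t_ε,x_ε,z_ε)‖ ≤ Mε is contained in φ_ε(t_ε,x_ε,z_ε), where M = max{1, max{M_f,M_L}}. -/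
open Pointwise

/-- For every `ε > 0` and every `(t_ε,x_ε,z_ε)`, the union of `φ(t,x,z)` over all
`(t,x,z)` with `‖(t,x,z) − (t_ε,x_ε,z_ε)‖ ≤ Mε` is contained in `φ_ε(t_ε,x_ε,z_ε)`,
where `M = max{1, max{M_f,M_L}}` and `K = max{K_f,K_L}`. -/
theorem phiEpsMap_contains_union {n m p : ℕ}
    (f : (Fin n → ℝ) → (Fin m → ℝ) → (Fin n → ℝ))
    (L : (Fin n → ℝ) → (Fin m → ℝ) → (Fin p → ℝ))
    (U : Set (Fin m → ℝ)) (hUne : U.Nonempty) (hUc : IsCompact U)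
    (hf : ContinuousOn (fun q : (Fin n → ℝ) × (Fin m → ℝ) => f q.1 q.2) (Set.univ ×ˢ U))
    (hL : ContinuousOn (fun q : (Fin n → ℝ) × (Fin m → ℝ) => L q.1 q.2) (Set.univ ×ˢ U))
    (Kf KL : ℝ) (hKf : 0 ≤ Kf) (hKL : 0 ≤ KL)
    (Mf ML : ℝ) (hMf : 0 < Mf) (hML : 0 ≤ ML)
    (hfLip : ∀ u ∈ U, ∀ x₁ x₂ : Fin n → ℝ, ‖f x₁ u - f x₂ u‖ ≤ Kf * ‖x₁ - x₂‖)
    (hLLip : ∀ u ∈ U, ∀ x₁ x₂ : Fin n → ℝ, ‖L x₁ u - L x₂ u‖ ≤ KL * ‖x₁ - x₂‖)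
    (hfBdd : ∀ (x : Fin n → ℝ), ∀ u ∈ U, ‖f x u‖ ≤ Mf)
    (hLBdd : ∀ (x : Fin n → ℝ), ∀ u ∈ U, ‖L x u‖ ≤ ML)
    (T : ℝ) (hT : 0 < T) (ε : ℝ) (hε : 0 < ε)
    (qε : ℝ × (Fin n → ℝ) × (Fin p → ℝ)) :
    (⋃ q ∈ Metric.closedBall qε (max 1 (max Mf ML) * ε),
        phiMap T (FLset f L U (-1)) q) ⊆
      phiEpsMap T ε (max Kf KL) (max 1 (max Mf ML)) (FLset f L U (-1)) qε := by

  set K := max Kf KL with hKdef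
  set M := max 1 (max Mf ML) with hMdef
  have hM1 : (1:ℝ) ≤ M := le_max_left _ _
  have hK0 : 0 ≤ K := le_trans hKf (le_max_left _ _)
  have hr0 : 0 ≤ ε * K * M := by positivity
  -- key inclusion on the state component
  have key : ∀ x : Fin n → ℝ, ‖x - qε.2.1‖ ≤ M * ε →
      FLset f L U (-1) x ⊆
        FLset f L U (-1) qε.2.1 + Metric.closedBall 0 (ε * K * M) := by
    intro x hx
    set xε := qε.2.1
    have hgenset : {q : (Fin n → ℝ) × (Fin p → ℝ) | ∃ u ∈ U, q = (f xε u, (-1:ℝ) • L xε u)} =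
        (fun u => (f xε u, (-1:ℝ) • L xε u)) '' U := by
      ext q; simp [Set.mem_image, eq_comm]
    have hcont : ContinuousOn (fun u => (f xε u, (-1:ℝ) • L xε u)) U := by
      have h1 : ContinuousOn (fun u => f xε u) U := by
        have := hf.comp (Continuous.prodMk_right xε).continuousOn
          (fun u hu => ⟨Set.mem_univ _, hu⟩)
        exact this
      have h2 : ContinuousOn (fun u => L xε u) U := by
        have := hL.comp (Continuous.prodMk_right xε).continuousOn
          (fun u hu => ⟨Set.mem_univ _, hu⟩)
        exact this
      exact h1.prodMk (h2.const_smul (-1:ℝ) :)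
    have hgen : IsCompact {q : (Fin n → ℝ) × (Fin p → ℝ) |
        ∃ u ∈ U, q = (f xε u, (-1:ℝ) • L xε u)} := by
      rw [hgenset]; exact hUc.image_of_continuousOn hcont
    have hFLc : IsCompact (FLset f L U (-1) xε) :=
      Metric.isCompact_of_isClosed_isBounded isClosed_closure
        ((isBounded_convexHull.mpr hgen.isBounded).closure)
    have hSc : IsCompact (FLset f L U (-1) xε + Metric.closedBall 0 (ε * K * M)) :=
      hFLc.add (isCompact_closedBall _ _)
    have hSconv : Convex ℝ (FLset f L U (-1) xε + Metric.closedBall 0 (ε * K * M)) :=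
      ((convex_convexHull ℝ _).closure).add (convex_closedBall _ _)
    unfold FLset
    refine closure_minimal (convexHull_min ?_ hSconv) hSc.isClosed
    rintro q ⟨u, hu, rfl⟩
    have hmem : (f xε u, (-1:ℝ) • L xε u) ∈ FLset f L U (-1) xε :=
      subset_closure (subset_convexHull ℝ _ ⟨u, hu, rfl⟩)
    have hb : (f x u - f xε u, (-1:ℝ) • L x u - (-1:ℝ) • L xε u) ∈
        Metric.closedBall (0 : (Fin n → ℝ) × (Fin p → ℝ)) (ε * K * M) := by
      rw [Metric.mem_closedBall, dist_zero_right, Prod.norm_def]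
      have h1 : ‖f x u - f xε u‖ ≤ ε * K * M := by
        have := hfLip u hu x xε
        have hK : Kf ≤ K := le_max_left _ _
        nlinarith [norm_nonneg (x - xε)]
      have h2 : ‖(-1:ℝ) • L x u - (-1:ℝ) • L xε u‖ ≤ ε * K * M := by
        have heq : (-1:ℝ) • L x u - (-1:ℝ) • L xε u = -(L x u - L xε u) := by
          simp [smul_sub, neg_smul, one_smul]; abel
        rw [heq, norm_neg]
        have := hLLip u hu x xε
        have hK : KL ≤ K := le_max_right _ _
        nlinarith [norm_nonneg (x - xε)]
      exact max_le h1 h2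
    have := Set.add_mem_add hmem hb
    convert this using 1
    · rfl
    · ext <;> simp
  rintro y hy
  simp only [Set.mem_iUnion, Metric.mem_closedBall, exists_prop] at hy
  obtain ⟨q, hq, hyq⟩ := hy
  rw [Prod.dist_eq] at hq
  have ht : dist q.1 qε.1 ≤ M * ε := le_trans (le_max_left _ _) hq
  have hq2 : dist q.2 qε.2 ≤ M * ε := le_trans (le_max_right _ _) hq
  rw [Prod.dist_eq] at hq2
  have hxd : ‖q.2.1 - qε.2.1‖ ≤ M * ε := by
    rw [← dist_eq_norm]
    exact le_trans (le_max_left _ _) hq2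
  have hFL := key q.2.1 hxd
  unfold phiMap at hyq
  unfold phiEpsMap
  by_cases hqε : qε.1 < T - M * ε
  · rw [if_pos hqε]
    have hqT : q.1 < T := by
      rw [Real.dist_eq] at ht
      have := abs_le.mp ht
      linarith [this.1, this.2]
    rw [if_pos hqT] at hyq
    exact ⟨hyq.1, hFL hyq.2⟩
  · rw [if_neg hqε]
    by_cases hqT : q.1 < T
    · rw [if_pos hqT] at hyq
      refine ⟨?_, ?_⟩
      · have : y.1 = 1 := hyq.1
        rw [this]; exact ⟨zero_le_one, le_refl 1⟩
      · exact subset_closure (subset_convexHull ℝ _ (Set.mem_union_left _ (hFL hyq.2)))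
    · rw [if_neg hqT] at hyq
      refine ⟨hyq.1, ?_⟩
      exact closure_mono (convexHull_mono (Set.union_subset_union_left _ hFL)) hyq.2
end

section
/- Assume ε > 2h > 0. Then Graph(Γ_{ε,h}) ⊆ Graph(G_ε) + ψ(ε,h)·B, where ψ(ε,h) = 4h + εhK, Graph(Γ_{ε,h}) = {((t_h,x_h,z_h),(s,v,w)) : (t_h,x_h,z_h) lattice point, (s,v,w) ∈ Γ_{ε,h}(t_h,x_h,z_h)}, Graph(G_ε) = {((t,x,z),(s,v,w)) : (s,v,w) ∈ G_ε(t,x,z)}, and B is the closed unit ball of (ℝ × ℝ^n × ℝ^p)² in the supremum norm. -/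
open Pointwise

/-- `G_ε(t,x,z) = {(t,x,z)} + ε·φ_ε(t,x,z)`. -/
def GepsMap {n p : ℕ} (T ε K M : ℝ)
    (FLm : (Fin n → ℝ) → Set ((Fin n → ℝ) × (Fin p → ℝ)))
    (q : ℝ × (Fin n → ℝ) × (Fin p → ℝ)) :
    Set (ℝ × ((Fin n → ℝ) × (Fin p → ℝ))) :=
  {q} + ε • phiEpsMap T ε K M FLm q

/-- The lattice `hℤ ⊆ ℝ`. -/
def latR (h : ℝ) : Set ℝ := {t | ∃ k : ℤ, t = k * h}

/-- The lattice of points of `ℝ^d` all of whose coordinates lie in `hℤ`. -/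
def latV (h : ℝ) {d : ℕ} : Set (Fin d → ℝ) := {x | ∀ i, ∃ k : ℤ, x i = k * h}

/-- The finite discrete set-valued map `Γ_{ε,h}`, with `α_{ε,h} = 2h + εhK + ε²KM`. -/
def GammaMap {n p : ℕ} (T ε h K M : ℝ)
    (FLm : (Fin n → ℝ) → Set ((Fin n → ℝ) × (Fin p → ℝ)))
    (q : ℝ × (Fin n → ℝ) × (Fin p → ℝ)) :
    Set (ℝ × ((Fin n → ℝ) × (Fin p → ℝ))) :=
  if q.1 < T - M * ε - h then
    (Set.Icc (q.1 + ε - 2 * h) (q.1 + ε + 2 * h) ∩ latR h) ×ˢ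
      (({q.2} + ε • FLm q.2.1 +
          Metric.closedBall 0 (2 * h + ε * h * K + ε ^ 2 * K * M)) ∩
        (latV h ×ˢ latV h))
  else
    (Set.Icc q.1 (q.1 + ε + 2 * h) ∩ latR h) ×ˢ
      (closure (convexHull ℝ
          (({q.2} + ε • FLm q.2.1 +
              Metric.closedBall 0 (2 * h + ε * h * K + ε ^ 2 * K * M)) ∪
            ({q.2} + Metric.closedBall 0 (2 * h)))) ∩
        (latV h ×ˢ latV h))

lemma ballSplit {X : Type*} [NormedAddCommGroup X] [NormedSpace ℝ X]
    {r₁ r₂ : ℝ} (h₁ : 0 ≤ r₁) (h₂ : 0 ≤ r₂) {a : X} (ha : ‖a‖ ≤ r₁ + r₂) :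
    ∃ a₁ a₂ : X, ‖a₁‖ ≤ r₁ ∧ ‖a₂‖ ≤ r₂ ∧ a = a₁ + a₂ := by
  by_cases hle : ‖a‖ ≤ r₁
  · exact ⟨a, 0, hle, by simpa using h₂, by simp⟩
  · push_neg at hle
    have hna : 0 < ‖a‖ := lt_of_le_of_lt h₁ hle
    refine ⟨(r₁ / ‖a‖) • a, (1 - r₁ / ‖a‖) • a, ?_, ?_, ?_⟩
    · rw [norm_smul, Real.norm_eq_abs, abs_of_nonneg (div_nonneg h₁ hna.le),
        div_mul_cancel₀ _ hna.ne']
    · rw [norm_smul, Real.norm_eq_abs,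
        abs_of_nonneg (by rw [sub_nonneg]; exact (div_le_one hna).2 hle.le),
        sub_mul, one_mul, div_mul_cancel₀ _ hna.ne']
      linarith
    · module

lemma hullSubset {X : Type*} [NormedAddCommGroup X] [NormedSpace ℝ X] [ProperSpace X]
    (c : X) (F : Set X) {ε r ψ h2 α : ℝ} (hε : 0 < ε) (hr : 0 ≤ r) (hψ : 0 ≤ ψ)
    (hh2 : 0 ≤ h2) (hh2ψ : h2 ≤ ψ) (hα : α = ψ + ε * r) :
    closure (convexHull ℝ (({c} + ε • F + Metric.closedBall 0 α) ∪
        ({c} + Metric.closedBall 0 h2))) ⊆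
      {c} + ε • closure (convexHull ℝ ((F + Metric.closedBall (0 : X) r) ∪ {0})) +
        Metric.closedBall 0 ψ := by
  set C := closure (convexHull ℝ ((F + Metric.closedBall (0 : X) r) ∪ {0})) with hC
  have hCconv : Convex ℝ C := (convex_convexHull ℝ _).closure
  have h0C : (0 : X) ∈ C := subset_closure (subset_convexHull ℝ _ (Or.inr rfl))
  have hSconv : Convex ℝ ({c} + ε • C + Metric.closedBall (0 : X) ψ) :=
    ((convex_singleton c).add (hCconv.smul ε)).add (convex_closedBall 0 ψ)
  have hcC : IsClosed ({c} + ε • C) := by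
    rw [Set.singleton_add]
    exact (Homeomorph.addLeft c).isClosedMap _
      ((isClosed_closure).smul_of_ne_zero hε.ne')
  have hSclosed : IsClosed ({c} + ε • C + Metric.closedBall (0 : X) ψ) := by
    rw [add_comm ({c} + ε • C)]
    exact hcC.add_left_of_isCompact (isCompact_closedBall 0 ψ)
  refine closure_minimal (convexHull_min ?_ hSconv) hSclosed
  rintro w (hw | hw)
  · obtain ⟨u1, hu1, a, ha, rfl⟩ := Set.mem_add.1 hw
    obtain ⟨c0, hc0, e, he, rfl⟩ := Set.mem_add.1 hu1
    obtain ⟨y, hy, rfl⟩ := Set.mem_smul_set.1 he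
    rcases hc0 with rfl
    rw [Metric.mem_closedBall, dist_zero_right, hα, add_comm ψ (ε * r)] at ha
    obtain ⟨a₁, a₂, ha₁, ha₂, rfl⟩ := ballSplit (by positivity) hψ ha
    refine Set.mem_add.2 ⟨c0 + (ε • y + a₁), ?_, a₂, ?_, by abel⟩
    · refine Set.mem_add.2 ⟨c0, rfl, ε • y + a₁, ?_, rfl⟩
      refine Set.mem_smul_set.2 ⟨y + ε⁻¹ • a₁, ?_,
        by rw [smul_add, smul_inv_smul₀ hε.ne']⟩
      refine subset_closure (subset_convexHull ℝ _
        (Or.inl (Set.mem_add.2 ⟨y, hy, ε⁻¹ • a₁, ?_, rfl⟩)))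
      rw [Metric.mem_closedBall, dist_zero_right, norm_smul, Real.norm_eq_abs,
        abs_of_nonneg (inv_nonneg.2 hε.le)]
      calc ε⁻¹ * ‖a₁‖ ≤ ε⁻¹ * (ε * r) :=
            mul_le_mul_of_nonneg_left ha₁ (inv_nonneg.2 hε.le)
        _ = r := by field_simp
    · rw [Metric.mem_closedBall, dist_zero_right]; exact ha₂
  · obtain ⟨c0, hc0, a, ha, rfl⟩ := Set.mem_add.1 hw
    rcases hc0 with rfl
    refine Set.mem_add.2 ⟨c0 + ε • (0 : X),
      Set.mem_add.2 ⟨c0, rfl, ε • 0, Set.mem_smul_set.2 ⟨0, h0C, rfl⟩, rfl⟩, a, ?_, by simp⟩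
    rw [Metric.mem_closedBall, dist_zero_right] at ha ⊢
    linarith

/-- If `ε > 2h > 0`, then `Graph(Γ_{ε,h}) ⊆ Graph(G_ε) + ψ(ε,h)·B` with
`ψ(ε,h) = 4h + εhK`, `K = max{K_f,K_L}`, `M = max{1, max{M_f,M_L}}`. -/
theorem GammaMap_graph_subset {n m p : ℕ}
    (f : (Fin n → ℝ) → (Fin m → ℝ) → (Fin n → ℝ))
    (L : (Fin n → ℝ) → (Fin m → ℝ) → (Fin p → ℝ))
    (U : Set (Fin m → ℝ)) (hUne : U.Nonempty) (hUc : IsCompact U)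
    (hf : ContinuousOn (fun q : (Fin n → ℝ) × (Fin m → ℝ) => f q.1 q.2) (Set.univ ×ˢ U))
    (hL : ContinuousOn (fun q : (Fin n → ℝ) × (Fin m → ℝ) => L q.1 q.2) (Set.univ ×ˢ U))
    (Kf KL : ℝ) (hKf : 0 ≤ Kf) (hKL : 0 ≤ KL)
    (Mf ML : ℝ) (hMf : 0 < Mf) (hML : 0 ≤ ML)
    (hfLip : ∀ u ∈ U, ∀ x₁ x₂ : Fin n → ℝ, ‖f x₁ u - f x₂ u‖ ≤ Kf * ‖x₁ - x₂‖)
    (hLLip : ∀ u ∈ U, ∀ x₁ x₂ : Fin n → ℝ, ‖L x₁ u - L x₂ u‖ ≤ KL * ‖x₁ - x₂‖)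
    (hfBdd : ∀ (x : Fin n → ℝ), ∀ u ∈ U, ‖f x u‖ ≤ Mf)
    (hLBdd : ∀ (x : Fin n → ℝ), ∀ u ∈ U, ‖L x u‖ ≤ ML)
    (T : ℝ) (hT : 0 < T) (ε h : ℝ) (hh : 0 < h) (hεh : 2 * h < ε) :
    {q : (ℝ × (Fin n → ℝ) × (Fin p → ℝ)) × (ℝ × (Fin n → ℝ) × (Fin p → ℝ)) |
        (q.1.1 ∈ latR h ∧ q.1.2.1 ∈ latV h ∧ q.1.2.2 ∈ latV h) ∧
        q.2 ∈ GammaMap T ε h (max Kf KL) (max 1 (max Mf ML)) (FLset f L U (-1)) q.1} ⊆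
      {q : (ℝ × (Fin n → ℝ) × (Fin p → ℝ)) × (ℝ × (Fin n → ℝ) × (Fin p → ℝ)) |
          q.2 ∈ GepsMap T ε (max Kf KL) (max 1 (max Mf ML)) (FLset f L U (-1)) q.1} +
        Metric.closedBall 0 (4 * h + ε * h * max Kf KL) := by
  set K := max Kf KL with hKdef
  set M := max 1 (max Mf ML) with hMdef
  have hK : 0 ≤ K := le_trans hKf (le_max_left _ _)
  have hM : (0:ℝ) ≤ M := le_trans zero_le_one (le_max_left _ _)
  have hε : 0 < ε := by linarith
  have hεhK : 0 ≤ ε * h * K := by positivity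
  rintro ⟨⟨t, xz⟩, ⟨s, vw⟩⟩ ⟨-, hmem⟩
  rw [Set.mem_add]
  unfold GammaMap at hmem
  by_cases hcase : t < T - M * ε - h
  · rw [if_pos hcase] at hmem
    obtain ⟨hs, hvw⟩ := hmem
    obtain ⟨u1, hu1, a, ha, rfl⟩ := Set.mem_add.1 hvw.1
    obtain ⟨c0, hc0, e, he, rfl⟩ := Set.mem_add.1 hu1
    obtain ⟨y, hy, rfl⟩ := Set.mem_smul_set.1 he
    rcases hc0 with rfl
    rw [Metric.mem_closedBall, dist_zero_right] at ha
    have ha' : ‖a‖ ≤ ε ^ 2 * K * M + (2 * h + ε * h * K) := by linarith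
    obtain ⟨a₁, a₂, ha₁, ha₂, rfl⟩ := ballSplit (by positivity) (by positivity) ha'
    refine ⟨((t, c0), (t + ε, c0 + ε • y + a₁)), ?_, (((0 : ℝ), (0 : (Fin n → ℝ) × (Fin p → ℝ))), (s - (t + ε), a₂)), ?_, ?_⟩
    · show (t + ε, c0 + ε • y + a₁) ∈ GepsMap T ε K M (FLset f L U (-1)) (t, c0)
      unfold GepsMap phiEpsMap
      rw [if_pos (show t < T - M * ε by linarith)]
      refine Set.mem_add.2 ⟨(t, c0), rfl, (ε, ε • y + a₁), ?_, ?_⟩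
      · refine Set.mem_smul_set.2 ⟨((1 : ℝ), y + ε⁻¹ • a₁), ⟨rfl, ?_⟩, ?_⟩
        · refine Set.mem_add.2 ⟨y, hy, ε⁻¹ • a₁, ?_, rfl⟩
          rw [Metric.mem_closedBall, dist_zero_right, norm_smul, Real.norm_eq_abs,
            abs_of_nonneg (inv_nonneg.2 hε.le)]
          calc ε⁻¹ * ‖a₁‖ ≤ ε⁻¹ * (ε ^ 2 * K * M) :=
                mul_le_mul_of_nonneg_left ha₁ (inv_nonneg.2 hε.le)
            _ = ε * K * M := by field_simp
        · rw [Prod.smul_mk, smul_eq_mul, mul_one, smul_add, smul_inv_smul₀ hε.ne']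
      · rw [Prod.mk_add_mk]
        exact congrArg _ (add_assoc _ _ _).symm
    · rw [Metric.mem_closedBall, dist_zero_right]
      have hs2 : |s - (t + ε)| ≤ 2 * h := by
        rw [abs_le]; exact ⟨by linarith [hs.1.1], by linarith [hs.1.2]⟩
      have hb : ‖((((0:ℝ), (0 : (Fin n → ℝ) × (Fin p → ℝ)))), (s - (t + ε), a₂))‖
          = max (max ‖(0:ℝ)‖ ‖(0 : (Fin n → ℝ) × (Fin p → ℝ))‖) (max ‖s - (t + ε)‖ ‖a₂‖) := rfl
      rw [hb]
      simp only [norm_zero, Real.norm_eq_abs]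
      exact max_le (max_le (by positivity) (by positivity))
        (max_le (by linarith) (by linarith))
    · show ((t, c0), (t + ε, c0 + ε • y + a₁)) + _ = ((t, c0), (s, c0 + ε • y + (a₁ + a₂)))
      simp only [Prod.mk_add_mk, Prod.mk.injEq]
      refine ⟨⟨by ring, by simp⟩, by ring, by abel⟩
  · rw [if_neg hcase] at hmem
    push_neg at hcase
    obtain ⟨hs, hvw⟩ := hmem
    have hvw2 := hullSubset xz (FLset f L U (-1) xz.1)
      (ε := ε) (r := ε * K * M) (ψ := 2 * h + ε * h * K) (h2 := 2 * h)
      hε (by positivity) (by positivity) (by positivity) (by linarith) (by ring) hvw.1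
    obtain ⟨u1, hu1, b2, hb2, rfl⟩ := Set.mem_add.1 hvw2
    obtain ⟨c0, hc0, e, he, rfl⟩ := Set.mem_add.1 hu1
    obtain ⟨y, hy, rfl⟩ := Set.mem_smul_set.1 he
    rcases hc0 with rfl
    rw [Metric.mem_closedBall, dist_zero_right] at hb2
    set s' := max (t + h) (min s (t + h + ε)) with hs'def
    have hsIcc := hs.1
    have hs'lb : t + h ≤ s' := le_max_left _ _
    have hs'ub : s' ≤ t + h + ε := max_le (by linarith) (min_le_right _ _)
    have habs : |s - s'| ≤ h := by
      rw [abs_le]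
      constructor
      · have h1 : s' ≤ max (t + h) s := max_le_max le_rfl (min_le_left _ _)
        have h2 : max (t + h) s ≤ s + h := max_le (by linarith [hsIcc.1]) (by linarith)
        linarith
      · have h1 : min s (t + h + ε) ≤ s' := le_max_right _ _
        have h2 : s - h ≤ min s (t + h + ε) :=
          le_min (by linarith) (by linarith [hsIcc.2])
        linarith
    refine ⟨((t + h, c0), (s', c0 + ε • y)), ?_, ((-h, (0 : (Fin n → ℝ) × (Fin p → ℝ))), (s - s', b2)), ?_, ?_⟩
    · show (s', c0 + ε • y) ∈ GepsMap T ε K M (FLset f L U (-1)) (t + h, c0)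
      unfold GepsMap phiEpsMap
      rw [if_neg (not_lt.2 (show T - M * ε ≤ t + h by linarith))]
      refine Set.mem_add.2 ⟨(t + h, c0), rfl, (s' - (t + h), ε • y), ?_, ?_⟩
      · refine Set.mem_smul_set.2 ⟨((s' - (t + h)) / ε, y), ⟨⟨?_, ?_⟩, hy⟩, ?_⟩
        · exact div_nonneg (by linarith) hε.le
        · rw [div_le_one hε]; linarith
        · rw [Prod.smul_mk, smul_eq_mul]
          congr 1
          field_simp
      · rw [Prod.mk_add_mk]
        exact Prod.ext_iff.2 ⟨by ring, rfl⟩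
    · rw [Metric.mem_closedBall, dist_zero_right]
      have hb : ‖(((-h : ℝ), (0 : (Fin n → ℝ) × (Fin p → ℝ))), (s - s', b2))‖
          = max (max ‖(-h : ℝ)‖ ‖(0 : (Fin n → ℝ) × (Fin p → ℝ))‖) (max ‖s - s'‖ ‖b2‖) := rfl
      rw [hb]
      simp only [norm_zero, Real.norm_eq_abs, abs_neg, abs_of_pos hh]
      have h1 := abs_le.1 habs
      exact max_le (max_le (by linarith) (by positivity))
        (max_le (by linarith [h1.1, h1.2]) (by linarith))
    · show ((t + h, c0), (s', c0 + ε • y)) + _ = ((t, c0), (s, c0 + ε • y + b2))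
      simp only [Prod.mk_add_mk, Prod.mk.injEq]
      refine ⟨⟨by ring, by simp⟩, by ring, trivial⟩
end

section
/- Let T > 0, x₀ ∈ ℝ, let P : ℝ → ℝ be a polynomial and Q a polynomial with Q′ = P. Then the objective space Y(0,x₀) = {(∫₀^T P(x_u(s))·u(s) ds, ∫₀^T u(s) ds) : u : [0,T] → {−1,1} measurable}, where x_u(s) = x₀ + ∫₀^s u(r) dr, equals the curve {(Q(x₀+δ) − Q(x₀), δ) : δ ∈ [−T, T]} ⊆ ℝ². -/
open MeasureTheory

open Set

private lemma bdd_intInt {f : ℝ → ℝ} (hf : Measurable f) {a b C : ℝ}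
    (hb : ∀ s ∈ Set.uIoc a b, |f s| ≤ C) : IntervalIntegrable f volume a b := by
  refine intervalIntegrable_iff.2 ⟨hf.aestronglyMeasurable.restrict, ?_⟩
  haveI : IsFiniteMeasure (volume.restrict (Set.uIoc a b)) := by
    constructor
    rw [Measure.restrict_apply_univ]
    exact measure_Ioc_lt_top
  exact HasFiniteIntegral.of_bounded ((ae_restrict_mem measurableSet_uIoc).mono
    (fun s hs => by simpa [Real.norm_eq_abs] using hb s hs))

private lemma key_int (u : ℝ → ℝ) (hu : Measurable u) (hb : ∀ s, |u s| ≤ 1) (x₀ : ℝ) :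
    ∀ (k : ℕ) (t : ℝ), 0 ≤ t →
      ∫ s in (0:ℝ)..t, (x₀ + ∫ r in (0:ℝ)..s, u r) ^ k * u s
        = ((x₀ + ∫ r in (0:ℝ)..t, u r) ^ (k + 1) - x₀ ^ (k + 1)) / (k + 1) := by
  have hui : ∀ a b : ℝ, IntervalIntegrable u volume a b := fun a b =>
    bdd_intInt hu (fun s _ => hb s)
  set F : ℝ → ℝ := fun s => ∫ r in (0:ℝ)..s, u r with hFdef
  have hFc : Continuous F := intervalIntegral.continuous_primitive hui 0
  have hFb : ∀ s, |F s| ≤ |s| := by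
    intro s
    have := intervalIntegral.norm_integral_le_of_norm_le_const (a := 0) (b := s) (C := 1)
      (f := u) (fun x _ => by simpa [Real.norm_eq_abs] using hb x)
    simpa [Real.norm_eq_abs] using this
  intro k
  induction k with
  | zero =>
    intro t ht
    simp [pow_one]
  | succ k IH =>
    intro t ht
    -- notation
    set g : ℝ → ℝ := fun s => (x₀ + F s) ^ k * u s with hgdef
    have hgm : Measurable g := ((measurable_const.add hFc.measurable).pow_const _).mul hu
    have hgb : ∀ s, |g s| ≤ (|x₀| + |s|) ^ k := by
      intro s
      have h1 : |x₀ + F s| ≤ |x₀| + |s| :=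
        (abs_add_le _ _).trans (by linarith [hFb s])
      have h2 : |(x₀ + F s) ^ k| ≤ (|x₀| + |s|) ^ k := by
        rw [abs_pow]; exact pow_le_pow_left₀ (abs_nonneg _) h1 k
      simpa [hgdef, abs_mul, abs_pow] using mul_le_mul h2 (hb s) (abs_nonneg _) (by positivity)
    have hgb' : ∀ s ∈ Set.Ioc (0:ℝ) t, |g s| ≤ (|x₀| + t) ^ k := by
      intro s hs
      refine (hgb s).trans (pow_le_pow_left₀ (by positivity) ?_ k)
      have : |s| ≤ t := by rw [abs_of_pos hs.1]; linarith [hs.2]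
      linarith
    have hgint : ∀ b : ℝ, 0 ≤ b → b ≤ t → IntervalIntegrable g volume 0 b := by
      intro b hb0 hbt
      refine bdd_intInt hgm (C := (|x₀| + t) ^ k) (fun s hs => ?_)
      rw [Set.uIoc_of_le hb0] at hs
      exact hgb' s ⟨hs.1, hs.2.trans hbt⟩
    have hbnd : ∀ (m : ℕ) (s : ℝ), s ∈ Set.Ioc (0:ℝ) t →
        |(x₀ + F s) ^ m * u s| ≤ (|x₀| + t) ^ m := by
      intro m s hs
      have h0 : |F s| ≤ t := (hFb s).trans (by rw [abs_of_pos hs.1]; exact hs.2)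
      have h1 : |x₀ + F s| ≤ |x₀| + t := (abs_add_le _ _).trans (by linarith)
      rw [abs_mul, abs_pow]
      calc |x₀ + F s| ^ m * |u s| ≤ (|x₀| + t) ^ m * 1 :=
            mul_le_mul (pow_le_pow_left₀ (abs_nonneg _) h1 m) (hb s) (abs_nonneg _)
              (by positivity)
        _ = _ := mul_one _
    set μ : Measure ℝ := volume.restrict (Set.Ioc (0:ℝ) t) with hμdef
    haveI : IsFiniteMeasure μ := by
      constructor
      rw [hμdef, Measure.restrict_apply_univ]
      exact measure_Ioc_lt_top
    have huμ : Integrable u μ :=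
      (intervalIntegrable_iff_integrableOn_Ioc_of_le ht).1 (hui 0 t)
    have hgμ : Integrable g μ :=
      (intervalIntegrable_iff_integrableOn_Ioc_of_le ht).1 (hgint t ht le_rfl)
    have hGm : Measurable fun s => (x₀ + F s) ^ (k + 1) * u s :=
      ((measurable_const.add hFc.measurable).pow_const _).mul hu
    have hGint : IntervalIntegrable (fun s => (x₀ + F s) ^ (k + 1) * u s) volume 0 t := by
      refine bdd_intInt hGm (C := (|x₀| + t) ^ (k + 1)) (fun s hs => ?_)
      rw [Set.uIoc_of_le ht] at hs
      exact hbnd (k + 1) s hs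
    have hGμ : Integrable (fun s => (x₀ + F s) ^ (k + 1) * u s) μ :=
      (intervalIntegrable_iff_integrableOn_Ioc_of_le ht).1 hGint
    have IH' : ∀ τ : ℝ, 0 ≤ τ →
        (∫ s in (0:ℝ)..τ, g s) = ((x₀ + F τ) ^ (k + 1) - x₀ ^ (k + 1)) / ((k : ℝ) + 1) :=
      fun τ hτ => IH τ hτ
    -- step A : split off the constant x₀
    have hFgm : Measurable fun s => F s * g s := hFc.measurable.mul hgm
    have hFgint : IntervalIntegrable (fun s => F s * g s) volume 0 t := by
      refine bdd_intInt hFgm (C := t * (|x₀| + t) ^ k) (fun s hs => ?_)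
      rw [Set.uIoc_of_le ht] at hs
      rw [abs_mul]
      have h1 : |F s| ≤ t := (hFb s).trans (by rw [abs_of_pos hs.1]; exact hs.2)
      exact mul_le_mul h1 (hgb' s hs) (abs_nonneg _) ht
    have hxgint : IntervalIntegrable (fun s => x₀ * g s) volume 0 t :=
      (hgint t ht le_rfl).const_mul x₀
    have stepA : ∫ s in (0:ℝ)..t, (x₀ + F s) ^ (k + 1) * u s
        = x₀ * (∫ s in (0:ℝ)..t, g s) + ∫ s in (0:ℝ)..t, F s * g s := by
      rw [← intervalIntegral.integral_const_mul, ← intervalIntegral.integral_add hxgint hFgint]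
      refine intervalIntegral.integral_congr fun s _ => ?_
      simp only [hgdef]
      ring
    -- step B : double integral representation
    set Φ : ℝ → ℝ → ℝ := fun s r => (Set.Iic s).indicator u r * g s with hΦdef
    have stepB : ∫ s in (0:ℝ)..t, F s * g s = ∫ s, (∫ r, Φ s r ∂μ) ∂μ := by
      rw [intervalIntegral.integral_of_le ht]
      refine setIntegral_congr_fun measurableSet_Ioc fun s hs => ?_
      have h1 : ∫ r, (Set.Iic s).indicator u r ∂μ = F s := by
        rw [hμdef, setIntegral_indicator measurableSet_Iic]
        have h2 : Set.Ioc (0:ℝ) t ∩ Set.Iic s = Set.Ioc 0 s := by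
          ext z
          simp only [Set.mem_inter_iff, Set.mem_Ioc, Set.mem_Iic]
          constructor
          · rintro ⟨⟨h3, _⟩, h5⟩; exact ⟨h3, h5⟩
          · rintro ⟨h3, h4⟩; exact ⟨⟨h3, h4.trans hs.2⟩, h4⟩
        rw [h2]
        exact (intervalIntegral.integral_of_le hs.1.le).symm
      calc F s * g s = (∫ r, (Set.Iic s).indicator u r ∂μ) * g s := by rw [h1]
        _ = ∫ r, Φ s r ∂μ := (integral_mul_const _ _).symm
    -- step C : Fubini swap
    have hswap : ∫ s, (∫ r, Φ s r ∂μ) ∂μ = ∫ r, (∫ s, Φ s r ∂μ) ∂μ := by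
      apply integral_integral_swap
      have h1 : Integrable (fun p : ℝ × ℝ => g p.1 * u p.2) (μ.prod μ) := hgμ.mul_prod huμ
      have h2 := h1.indicator (s := {p : ℝ × ℝ | p.2 ≤ p.1})
        (measurableSet_le measurable_snd measurable_fst)
      have h3 : Function.uncurry Φ
          = ({p : ℝ × ℝ | p.2 ≤ p.1}).indicator (fun p => g p.1 * u p.2) := by
        funext p
        simp only [Function.uncurry, hΦdef, Set.indicator_apply, Set.mem_Iic, Set.mem_setOf_eq]
        by_cases h : p.2 ≤ p.1 <;> simp [h, mul_comm]
      rw [h3]; exact h2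
    -- step D : inner integral after the swap
    have stepD : ∀ r ∈ Set.Ioc (0:ℝ) t, (∫ s, Φ s r ∂μ)
        = u r * (((x₀ + F t) ^ (k + 1) - x₀ ^ (k + 1)) / ((k : ℝ) + 1)
            - ((x₀ + F r) ^ (k + 1) - x₀ ^ (k + 1)) / ((k : ℝ) + 1)) := by
      intro r hr
      have e1 : (fun s => Φ s r) = fun s => u r * (Set.Ici r).indicator g s := by
        funext s
        simp only [hΦdef, Set.indicator_apply, Set.mem_Iic, Set.mem_Ici]
        by_cases h : r ≤ s <;> simp [h]
      rw [e1, integral_const_mul]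
      congr 1
      rw [hμdef, setIntegral_indicator measurableSet_Ici]
      have h2 : Set.Ioc (0:ℝ) t ∩ Set.Ici r = Set.Icc r t := by
        ext z
        simp only [Set.mem_inter_iff, Set.mem_Ioc, Set.mem_Ici, Set.mem_Icc]
        constructor
        · rintro ⟨⟨_, h4⟩, h5⟩; exact ⟨h5, h4⟩
        · rintro ⟨h3, h4⟩; exact ⟨⟨lt_of_lt_of_le hr.1 h3, h4⟩, h3⟩
      rw [h2, integral_Icc_eq_integral_Ioc, ← intervalIntegral.integral_of_le hr.2,
        ← intervalIntegral.integral_interval_sub_left (hgint t ht le_rfl)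
          (hgint r hr.1.le hr.2),
        IH' t ht, IH' r hr.1.le]
    -- step E : outer integral
    have h4 : ∫ r, u r ∂μ = F t := by
      rw [hμdef, ← intervalIntegral.integral_of_le ht]
    have h5 : ∫ r, (x₀ + F r) ^ (k + 1) * u r ∂μ
        = ∫ s in (0:ℝ)..t, (x₀ + F s) ^ (k + 1) * u s := by
      rw [hμdef, intervalIntegral.integral_of_le ht]
    have stepE : ∫ r, (∫ s, Φ s r ∂μ) ∂μ
        = (x₀ + F t) ^ (k + 1) / ((k : ℝ) + 1) * F t
          - 1 / ((k : ℝ) + 1) * ∫ s in (0:ℝ)..t, (x₀ + F s) ^ (k + 1) * u s := by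
      have e2 : ∫ r, (∫ s, Φ s r ∂μ) ∂μ
          = ∫ r, ((x₀ + F t) ^ (k + 1) / ((k : ℝ) + 1) * u r
              - 1 / ((k : ℝ) + 1) * ((x₀ + F r) ^ (k + 1) * u r)) ∂μ := by
        rw [hμdef]
        refine setIntegral_congr_fun measurableSet_Ioc fun r hr => ?_
        have := stepD r hr
        rw [hμdef] at this
        rw [this]
        ring
      rw [e2, integral_sub (huμ.const_mul _) (hGμ.const_mul _),
        integral_const_mul, integral_const_mul, h4, h5]
    -- put everything together
    have heq : ∫ s in (0:ℝ)..t, (x₀ + F s) ^ (k + 1) * u s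
        = x₀ * (((x₀ + F t) ^ (k + 1) - x₀ ^ (k + 1)) / ((k : ℝ) + 1))
          + ((x₀ + F t) ^ (k + 1) / ((k : ℝ) + 1) * F t
            - 1 / ((k : ℝ) + 1) * ∫ s in (0:ℝ)..t, (x₀ + F s) ^ (k + 1) * u s) := by
      conv_lhs => rw [stepA, stepB, hswap, stepE, IH' t ht]
    show (∫ s in (0:ℝ)..t, (x₀ + F s) ^ (k + 1) * u s)
        = ((x₀ + F t) ^ (k + 1 + 1) - x₀ ^ (k + 1 + 1)) / (↑(k + 1) + 1)
    set A := ∫ s in (0:ℝ)..t, (x₀ + F s) ^ (k + 1) * u s with hA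
    have hK : ((k : ℝ) + 1) ≠ 0 := by positivity
    have hK2 : ((k : ℝ) + 1 + 1) ≠ 0 := by positivity
    push_cast
    rw [eq_div_iff hK2, pow_succ (x₀ + F t) (k + 1), pow_succ x₀ (k + 1)]
    field_simp at heq
    linarith [heq]

private lemma cont_mul_intInt {c u : ℝ → ℝ} (hc : Continuous c) (hu : Measurable u)
    (hb : ∀ s, |u s| ≤ 1) (a b : ℝ) :
    IntervalIntegrable (fun s => c s * u s) volume a b := by
  obtain ⟨C, hC⟩ := (isCompact_uIcc (a := a) (b := b)).exists_bound_of_continuousOn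
    hc.continuousOn
  refine bdd_intInt (hc.measurable.mul hu) (C := |C| * 1) (fun s hs => ?_)
  rw [Pi.mul_apply, abs_mul]
  have h1 : |c s| ≤ |C| := ((hC s (uIoc_subset_uIcc hs)).trans (le_abs_self C))
  exact mul_le_mul h1 (hb s) (abs_nonneg _) (abs_nonneg _)

private lemma poly_int (u : ℝ → ℝ) (hu : Measurable u) (hb : ∀ s, |u s| ≤ 1)
    (x₀ : ℝ) (Q : Polynomial ℝ) {t : ℝ} (ht : 0 ≤ t) :
    ∫ s in (0:ℝ)..t, Q.derivative.eval (x₀ + ∫ r in (0:ℝ)..s, u r) * u s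
      = Q.eval (x₀ + ∫ r in (0:ℝ)..t, u r) - Q.eval x₀ := by
  have hui : ∀ a b : ℝ, IntervalIntegrable u volume a b := fun a b =>
    bdd_intInt hu (fun s _ => hb s)
  have hFc : Continuous fun s => ∫ r in (0:ℝ)..s, u r :=
    intervalIntegral.continuous_primitive hui 0
  induction Q using Polynomial.induction_on' with
  | add p q hp hq =>
    have hcp : Continuous fun s => p.derivative.eval (x₀ + ∫ r in (0:ℝ)..s, u r) :=
      p.derivative.continuous_aeval.comp (continuous_const.add hFc)
    have hcq : Continuous fun s => q.derivative.eval (x₀ + ∫ r in (0:ℝ)..s, u r) :=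
      q.derivative.continuous_aeval.comp (continuous_const.add hFc)
    rw [Polynomial.derivative_add]
    have : ∫ s in (0:ℝ)..t, (p.derivative + q.derivative).eval (x₀ + ∫ r in (0:ℝ)..s, u r) * u s
        = (∫ s in (0:ℝ)..t, p.derivative.eval (x₀ + ∫ r in (0:ℝ)..s, u r) * u s)
          + ∫ s in (0:ℝ)..t, q.derivative.eval (x₀ + ∫ r in (0:ℝ)..s, u r) * u s := by
      rw [← intervalIntegral.integral_add (cont_mul_intInt hcp hu hb 0 t)
        (cont_mul_intInt hcq hu hb 0 t)]
      refine intervalIntegral.integral_congr fun s _ => ?_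
      simp [Polynomial.eval_add]
      ring
    rw [this, hp, hq]
    simp only [Polynomial.eval_add]
    ring
  | monomial n a =>
    rw [Polynomial.derivative_monomial]
    cases n with
    | zero => simp
    | succ m =>
      have h1 : ∫ s in (0:ℝ)..t,
            (Polynomial.monomial m (a * (↑m + 1))).eval (x₀ + ∫ r in (0:ℝ)..s, u r) * u s
          = a * ((m : ℝ) + 1)
            * ∫ s in (0:ℝ)..t, (x₀ + ∫ r in (0:ℝ)..s, u r) ^ m * u s := by
        rw [← intervalIntegral.integral_const_mul]
        refine intervalIntegral.integral_congr fun s _ => ?_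
        simp [Polynomial.eval_monomial]
        ring
      simp only [Nat.add_sub_cancel, Nat.cast_add, Nat.cast_one]
      rw [h1, key_int u hu hb x₀ m t ht]
      have hm : ((m : ℝ) + 1) ≠ 0 := by positivity
      simp only [Polynomial.eval_monomial]
      field_simp

/-- For the bang–bang control system `ẋ = u`, `u ∈ {−1,1}`, `x(0) = x₀` on `[0,T]`,
with biobjective cost `(∫₀^T P(x_u(s))u(s) ds, ∫₀^T u(s) ds)` where `Q′ = P`, the
objective space `Y(0,x₀)` equals the curve `{(Q(x₀+δ) − Q(x₀), δ) : δ ∈ [−T,T]}`. -/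
theorem objective_space_eq_curve (T : ℝ) (hT : 0 < T) (x₀ : ℝ)
    (P Q : Polynomial ℝ) (hQ : Q.derivative = P) :
    {y : ℝ × ℝ | ∃ u : ℝ → ℝ, Measurable u ∧ (∀ s, u s ∈ ({-1, 1} : Set ℝ)) ∧
        y = ((∫ s in (0:ℝ)..T, P.eval (x₀ + ∫ r in (0:ℝ)..s, u r) * u s),
             (∫ s in (0:ℝ)..T, u s))} =
      {y : ℝ × ℝ | ∃ δ ∈ Set.Icc (-T) T, y = (Q.eval (x₀ + δ) - Q.eval x₀, δ)} := by
  ext y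
  simp only [Set.mem_setOf_eq]
  constructor
  · rintro ⟨u, hu, hval, rfl⟩
    have hb : ∀ s, |u s| ≤ 1 := by
      intro s
      have h := hval s
      simp only [Set.mem_insert_iff, Set.mem_singleton_iff] at h
      rcases h with h | h <;> rw [h] <;> norm_num
    refine ⟨∫ s in (0:ℝ)..T, u s, ?_, ?_⟩
    · have := intervalIntegral.norm_integral_le_of_norm_le_const (a := 0) (b := T)
        (C := 1) (f := u) (fun x _ => by simpa [Real.norm_eq_abs] using hb x)
      have h2 : |∫ s in (0:ℝ)..T, u s| ≤ T := by
        rw [← Real.norm_eq_abs]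
        calc ‖∫ s in (0:ℝ)..T, u s‖ ≤ 1 * |T - 0| := this
          _ = T := by rw [sub_zero, abs_of_pos hT, one_mul]
      exact abs_le.1 h2
    · simp only [Prod.mk.injEq]
      exact ⟨by rw [← hQ, poly_int u hu hb x₀ Q hT.le], trivial⟩
  · rintro ⟨δ, ⟨hδ1, hδ2⟩, rfl⟩
    set c : ℝ := (T + δ) / 2 with hc
    have hc0 : 0 ≤ c := by rw [hc]; linarith
    have hcT : c ≤ T := by rw [hc]; linarith
    set u : ℝ → ℝ := fun s => if s ≤ c then 1 else -1 with hudef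
    have hu : Measurable u := by
      apply Measurable.ite measurableSet_Iic <;> exact measurable_const
    have hval : ∀ s, u s ∈ ({-1, 1} : Set ℝ) := by
      intro s
      by_cases h : s ≤ c <;> simp [hudef, h]
    have hb : ∀ s, |u s| ≤ 1 := by
      intro s
      have h := hval s
      simp only [Set.mem_insert_iff, Set.mem_singleton_iff] at h
      rcases h with h | h <;> rw [h] <;> norm_num
    have hui : ∀ a b : ℝ, IntervalIntegrable u volume a b := fun a b =>
      bdd_intInt hu (fun s _ => hb s)
    have hint : ∫ s in (0:ℝ)..T, u s = δ := by
      have h1 : ∫ s in (0:ℝ)..c, u s = c := by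
        have : ∫ s in (0:ℝ)..c, u s = ∫ s in (0:ℝ)..c, (1:ℝ) := by
          refine intervalIntegral.integral_congr fun s hs => ?_
          rw [Set.uIcc_of_le hc0] at hs
          simp [hudef, hs.2]
        rw [this]
        simp
      have h2 : ∫ s in c..T, u s = -(T - c) := by
        have : ∫ s in c..T, u s = ∫ s in c..T, (-1:ℝ) := by
          refine intervalIntegral.integral_congr_ae (.of_forall fun s hs => ?_)
          rw [Set.uIoc_of_le hcT] at hs
          simp [hudef, not_le.2 hs.1]
        rw [this]
        simp
      have h3 := intervalIntegral.integral_add_adjacent_intervals (hui 0 c) (hui c T)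
      rw [h1, h2] at h3
      rw [← h3, hc]
      ring
    refine ⟨u, hu, hval, ?_⟩
    simp only [Prod.mk.injEq]
    constructor
    · rw [← hQ, poly_int u hu hb x₀ Q hT.le, hint]
    · exact hint.symm
end
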